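/- arXiv:1011.1686 — 4 statements merged into one kernel-verified Lean document; each statement's English description precedes it below -/
import Mathlib

section
/- Let γ : ℝ → ℂ be a C¹ loop, p ∈ ℂ with γ(t) ≠ p for all t, and v ∈ ℂ with v ≠ 0. Suppose the set Z = {t ∈ [0,1) : γ(t) = p + s·v for some real s > 0} is finite and for every t ∈ Z one has det(v, deriv γ t) ≠ 0, where det(a,b) := a.re·b.im − a.im·b.re. Then ind_p(γ) = ∑_{t ∈ Z} sign(det(v, deriv γ t)). -/
/-!
Let `L` be the primitive of `γ'/(γ - p)` vanishing at `0`, so that `(γ - p) = (γ 0 - p) exp L`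
and `L 1 = 2πik` with `k` the index. Then `φ = Im (L + log ((γ 0 - p)/v)) / 2π` is a continuous
lift of `arg ((γ - p)/v) / 2π` with `φ (t + 1) = φ t + k`; `γ` meets the ray `p + ℝ₊ v` exactly
when `φ` is an integer, and there `sign φ' = sign det(v, γ')`. Between two successive integer
times `φ` stays in one interval `[n, n + 1]`, so it increases there by half the sum of the signs
of `φ'` at the two ends; summing over a period gives `k = ∑ sign φ'`.
-/

open Set Filter Complex
open scoped Topology Real

theorem Real.sign_div_of_pos (x : ℝ) {c : ℝ} (hc : 0 < c) : Real.sign (x / c) = Real.sign x := by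
  rcases lt_trichotomy x 0 with hx | rfl | hx
  · rw [Real.sign_of_neg hx, Real.sign_of_neg (div_neg_of_neg_of_pos hx hc)]
  · rw [zero_div]
  · rw [Real.sign_of_pos hx, Real.sign_of_pos (div_pos hx hc)]

theorem Complex.exists_pos_exp_eq_ofReal_iff (z : ℂ) :
    (∃ s : ℝ, 0 < s ∧ exp z = s) ↔ ∃ n : ℤ, z.im = n * (2 * π) := by
  constructor
  · rintro ⟨s, hs, hexp⟩
    obtain ⟨n, hn⟩ : ∃ n : ℤ, z - Real.log s = n * (2 * π * I) := by
      rw [← exp_eq_one_iff, exp_sub, hexp, ← ofReal_exp, Real.exp_log hs, div_self]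
      exact ofReal_ne_zero.2 hs.ne'
    refine ⟨n, ?_⟩
    simpa using congrArg im hn
  · rintro ⟨n, hn⟩
    refine ⟨Real.exp z.re, Real.exp_pos _, ?_⟩
    have hz : z = z.re + n * (2 * π * I) := Complex.ext (by simp) (by simp [hn])
    rw [hz, exp_add, exp_int_mul_two_pi_mul_I, mul_one, ofReal_exp]
    simp

theorem Complex.sign_im_div_ofReal_mul (w v : ℂ) {s : ℝ} (hs : 0 < s) :
    Real.sign ((w / (s * v)).im) = Real.sign (v.re * w.im - v.im * w.re) := by
  rcases eq_or_ne v 0 with rfl | hv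
  · simp
  rw [mul_comm, ← div_div, div_ofReal_im, Real.sign_div_of_pos _ hs, div_im,
    ← sub_div, Real.sign_div_of_pos _ (normSq_pos.2 hv)]
  ring_nf

theorem HasDerivAt.exists_mem_Ioo_lt_of_pos {φ : ℝ → ℝ} {a b d : ℝ} (h : HasDerivAt φ d a)
    (hd : 0 < d) (hab : a < b) : ∃ t ∈ Ioo a b, φ a < φ t := by
  have hslope : ∀ᶠ t in 𝓝[>] a, 0 < slope φ a t :=
    ((hasDerivAt_iff_tendsto_slope.1 h).eventually_const_lt hd).filter_mono (nhdsGT_le_nhdsNE a)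
  obtain ⟨t, hpos, ht⟩ := (hslope.and (Ioo_mem_nhdsGT hab)).exists
  rw [slope_comm, slope_pos_iff_gt ht.1] at hpos
  exact ⟨t, ht, hpos⟩

theorem exists_int_mapsTo_Icc {φ : ℝ → ℝ} {a b : ℝ} (hφ : Continuous φ) (hab : a < b)
    (hint : ∀ t ∈ Ioo a b, ∀ z : ℤ, φ t ≠ z) : ∃ n : ℤ, MapsTo φ (Icc a b) (Icc n (n + 1)) := by
  obtain ⟨m, hm⟩ : (Ioo a b).Nonempty := nonempty_Ioo.2 hab
  refine ⟨⌊φ m⌋, ?_⟩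
  have hivt : ∀ t ∈ Ioo a b, Icc (φ t) (φ m) ⊆ φ '' Ioo a b ∧ Icc (φ m) (φ t) ⊆ φ '' Ioo a b :=
    fun t ht => ⟨isPreconnected_Ioo.intermediate_value ht hm hφ.continuousOn,
      isPreconnected_Ioo.intermediate_value hm ht hφ.continuousOn⟩
  have hinner : MapsTo φ (Ioo a b) (Icc ⌊φ m⌋ (⌊φ m⌋ + 1)) := by
    intro t ht
    by_contra hout
    rcases not_and_or.1 hout with hlt | hgt
    · obtain ⟨s, hs, hφs⟩ := (hivt t ht).1 ⟨(not_le.1 hlt).le, Int.floor_le _⟩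
      exact hint s hs _ hφs
    · obtain ⟨s, hs, hφs⟩ := (hivt t ht).2 ⟨(Int.lt_floor_add_one _).le, (not_le.1 hgt).le⟩
      exact hint s hs (⌊φ m⌋ + 1) (by rw [hφs]; push_cast; ring)
  simpa [closure_Ioo hab.ne] using hinner.closure hφ

theorem HasDerivAt.eq_add_one_sub_sign_div_two {φ : ℝ → ℝ} {a b d : ℝ} {n : ℤ}
    (h : HasDerivAt φ d a) (hd : d ≠ 0) (hab : a < b) (hint : ∃ z : ℤ, φ a = z)
    (hmaps : MapsTo φ (Icc a b) (Icc n (n + 1))) : φ a = n + (1 - Real.sign d) / 2 := by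
  obtain ⟨z, hz⟩ := hint
  have hza := hmaps (left_mem_Icc.2 hab.le)
  rw [hz] at hza
  rcases hd.lt_or_gt with hneg | hpos
  · obtain ⟨t, ht, hlt⟩ := h.neg.exists_mem_Ioo_lt_of_pos (neg_pos.2 hneg) hab
    rw [Pi.neg_apply, Pi.neg_apply, neg_lt_neg_iff] at hlt
    have hzt : (n : ℝ) < z := by linarith [(hmaps (Ioo_subset_Icc_self ht)).1]
    have hzn : z = n + 1 := by
      have : n < z := by exact_mod_cast hzt
      have : z ≤ n + 1 := by exact_mod_cast hza.2
      omega
    rw [Real.sign_of_neg hneg, hz, hzn]; push_cast; ring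
  · obtain ⟨t, ht, hlt⟩ := h.exists_mem_Ioo_lt_of_pos hpos hab
    have hzt : (z : ℝ) < n + 1 := by linarith [(hmaps (Ioo_subset_Icc_self ht)).2]
    have hzn : z = n := by
      have : z < n + 1 := by exact_mod_cast hzt
      have : n ≤ z := by exact_mod_cast hza.1
      omega
    rw [Real.sign_of_pos hpos, hz, hzn]; ring

theorem HasDerivAt.eq_add_one_add_sign_div_two {φ : ℝ → ℝ} {a b d : ℝ} {n : ℤ}
    (h : HasDerivAt φ d b) (hd : d ≠ 0) (hab : a < b) (hint : ∃ z : ℤ, φ b = z)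
    (hmaps : MapsTo φ (Icc a b) (Icc n (n + 1))) : φ b = n + (1 + Real.sign d) / 2 := by
  have hrefl : HasDerivAt (fun t => φ (-t)) (-d) (-b) := by
    have h' : HasDerivAt φ d (-(-b)) := by rwa [neg_neg]
    exact (h'.comp (-b) (hasDerivAt_neg' (-b))).congr_deriv (mul_neg_one d)
  have := hrefl.eq_add_one_sub_sign_div_two (neg_ne_zero.2 hd) (neg_lt_neg hab)
    (by simpa using hint) (fun t ht => hmaps ⟨le_neg.1 ht.2, neg_le.1 ht.1⟩)
  simpa [Real.sign_neg, sub_neg_eq_add] using this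

theorem sub_eq_sign_add_sign_div_two {φ : ℝ → ℝ} (hφ : Differentiable ℝ φ) {a b : ℝ} (hab : a < b)
    (ha : ∃ z : ℤ, φ a = z) (hb : ∃ z : ℤ, φ b = z) (hint : ∀ t ∈ Ioo a b, ∀ z : ℤ, φ t ≠ z)
    (hda : deriv φ a ≠ 0) (hdb : deriv φ b ≠ 0) :
    φ b - φ a = (Real.sign (deriv φ a) + Real.sign (deriv φ b)) / 2 := by
  obtain ⟨n, hmaps⟩ := exists_int_mapsTo_Icc hφ.continuous hab hint
  rw [(hφ b).hasDerivAt.eq_add_one_add_sign_div_two hdb hab hb hmaps,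
    (hφ a).hasDerivAt.eq_add_one_sub_sign_div_two hda hab ha hmaps]
  ring

theorem sub_eq_sum_sign_deriv {φ : ℝ → ℝ} (hφ : Differentiable ℝ φ) (S : Finset ℝ) {a b : ℝ}
    (hab : a < b) (ha : ∃ z : ℤ, φ a = z) (hb : ∃ z : ℤ, φ b = z)
    (hS : ∀ t, t ∈ S ↔ t ∈ Ioo a b ∧ ∃ z : ℤ, φ t = z)
    (hreg : ∀ t ∈ Icc a b, (∃ z : ℤ, φ t = z) → deriv φ t ≠ 0) :
    φ b - φ a = (Real.sign (deriv φ a) + Real.sign (deriv φ b)) / 2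
      + ∑ t ∈ S, Real.sign (deriv φ t) := by
  induction S using Finset.strongInduction generalizing a b with
  | H S ih =>
  rcases S.eq_empty_or_nonempty with rfl | ⟨c, hc⟩
  · rw [Finset.sum_empty, add_zero]
    exact sub_eq_sign_add_sign_div_two hφ hab ha hb
      (fun t ht z hz => by simpa using (hS t).2 ⟨ht, z, hz⟩)
      (hreg a (left_mem_Icc.2 hab.le) ha) (hreg b (right_mem_Icc.2 hab.le) hb)
  obtain ⟨⟨hac, hcb⟩, hcint⟩ := (hS c).1 hc
  have hsub : ∀ (p : ℝ → Prop) [DecidablePred p], (S.erase c).filter p ⊂ S := fun _ _ =>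
    (Finset.filter_subset _ _).trans_ssubset (Finset.erase_ssubset hc)
  have hleft := ih _ (hsub (· < c)) hac ha hcint
    (fun t => by simp only [Finset.mem_filter, Finset.mem_erase, hS, mem_Ioo]; grind)
    (fun t ht => hreg t ⟨ht.1, ht.2.trans hcb.le⟩)
  have hright := ih _ (hsub (¬ · < c)) hcb hcint hb
    (fun t => by simp only [Finset.mem_filter, Finset.mem_erase, hS, mem_Ioo]; grind)
    (fun t ht => hreg t ⟨hac.le.trans ht.1, ht.2⟩)
  rw [← Finset.add_sum_erase S _ hc, ← Finset.sum_filter_add_sum_filter_not (S.erase c) (· < c)]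
  linarith

theorem eq_zero_of_apply_one_eq_add_of_forall_ne {φ : ℝ → ℝ} (hφ : Continuous φ) {k : ℤ}
    (hk : φ 1 = φ 0 + k) (hnone : ∀ t ∈ Ico (0 : ℝ) 1, ∀ z : ℤ, φ t ≠ z) : k = 0 := by
  obtain ⟨n, hmaps⟩ := exists_int_mapsTo_Icc hφ zero_lt_one
    fun t ht => hnone t (Ioo_subset_Ico_self ht)
  have h0 := hmaps (left_mem_Icc.2 zero_le_one)
  have h1 := hmaps (right_mem_Icc.2 zero_le_one)
  have hφ0 := hnone 0 (left_mem_Ico.2 one_pos)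
  have hlt : (k : ℝ) < 1 := lt_of_not_ge fun h =>
    hφ0 n (le_antisymm (by linarith [h1.2]) h0.1)
  have hgt : (-1 : ℝ) < k := lt_of_not_ge fun h =>
    hφ0 (n + 1) (by push_cast; exact le_antisymm h0.2 (by linarith [h1.1]))
  have : k < 1 := by exact_mod_cast hlt
  have : -1 < k := by exact_mod_cast hgt
  omega

theorem intCast_eq_sum_sign_deriv {φ : ℝ → ℝ} (hφ : Differentiable ℝ φ) {k : ℤ}
    (hk : ∀ t, φ (t + 1) = φ t + k) (S : Finset ℝ)
    (hS : ∀ t, t ∈ S ↔ t ∈ Ico 0 1 ∧ ∃ z : ℤ, φ t = z) (hreg : ∀ t ∈ S, deriv φ t ≠ 0) :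
    (k : ℝ) = ∑ t ∈ S, Real.sign (deriv φ t) := by
  have hderiv : ∀ t, deriv φ (t + 1) = deriv φ t := fun t => by
    rw [← deriv_comp_add_const, funext hk, deriv_add_const]
  have hshift : ∀ t, (∃ z : ℤ, φ (t + 1) = z) ↔ ∃ z : ℤ, φ t = z := fun t => by
    simp only [hk]
    exact ⟨fun ⟨z, hz⟩ => ⟨z - k, by push_cast; linarith⟩,
      fun ⟨z, hz⟩ => ⟨z + k, by push_cast; linarith⟩⟩
  rcases S.eq_empty_or_nonempty with rfl | hne
  · have hk0 : k = 0 := eq_zero_of_apply_one_eq_add_of_forall_ne hφ.continuous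
      (by rw [← hk, zero_add]) fun t ht z hz => by simpa using (hS t).2 ⟨ht, z, hz⟩
    simp [hk0]
  set c := S.min' hne
  obtain ⟨⟨hc0, hc1⟩, hcint⟩ := (hS c).1 (S.min'_mem hne)
  have hfold : ∀ t ∈ Icc c (c + 1), (∃ z : ℤ, φ t = z) → (t < 1 ∧ t ∈ S) ∨ t - 1 ∈ S := by
    intro t ht hint
    rcases lt_or_ge t 1 with ht1 | ht1
    · exact .inl ⟨ht1, (hS t).2 ⟨⟨hc0.trans ht.1, ht1⟩, hint⟩⟩
    · refine .inr ((hS _).2 ⟨⟨by linarith, by linarith [ht.2]⟩, ?_⟩)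
      rwa [← hshift, sub_add_cancel]
  have hinterval := sub_eq_sum_sign_deriv hφ (S.erase c) (lt_add_one c) hcint
    ((hshift c).2 hcint) (fun t => ?_) (fun t ht hint => ?_)
  · rw [hk, hderiv, add_sub_cancel_left] at hinterval
    rw [hinterval, ← Finset.add_sum_erase S _ (S.min'_mem hne)]
    ring
  · rw [Finset.mem_erase]
    constructor
    · rintro ⟨htc, htS⟩
      obtain ⟨⟨-, ht1⟩, hint⟩ := (hS t).1 htS
      exact ⟨⟨lt_of_le_of_ne (S.min'_le t htS) (Ne.symm htc), by linarith⟩, hint⟩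
    · rintro ⟨ht, hint⟩
      rcases hfold t (Ioo_subset_Icc_self ht) hint with ⟨-, htS⟩ | htS
      · exact ⟨ht.1.ne', htS⟩
      · linarith [S.min'_le _ htS, ht.2]
  · rcases hfold t ht hint with ⟨-, htS⟩ | htS
    · exact hreg t htS
    · rw [← sub_add_cancel t 1, hderiv]
      exact hreg _ htS

theorem HasDerivAt.complex_im {f : ℝ → ℂ} {f' : ℂ} {x : ℝ} (h : HasDerivAt f f' x) :
    HasDerivAt (fun t => (f t).im) f'.im x :=
  Complex.imCLM.hasFDerivAt.comp_hasDerivAt x h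

section LogDeriv

variable {w : ℝ → ℂ}

theorem continuous_deriv_div (hw : ContDiff ℝ 1 w) (hw0 : ∀ t, w t ≠ 0) :
    Continuous fun t => deriv w t / w t :=
  (hw.continuous_deriv le_rfl).div hw.continuous hw0

theorem mul_exp_integral_deriv_div (hw : ContDiff ℝ 1 w) (hw0 : ∀ t, w t ≠ 0) (t : ℝ) :
    w 0 * exp (∫ s in (0 : ℝ)..t, deriv w s / w s) = w t := by
  set I : ℝ → ℂ := fun t => ∫ s in (0 : ℝ)..t, deriv w s / w s
  have hI : ∀ t, HasDerivAt I (deriv w t / w t) t := fun t =>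
    ((continuous_deriv_div hw hw0).integral_hasStrictDerivAt 0 t).hasDerivAt
  have hconst : ∀ t, HasDerivAt (fun t => w t * exp (-I t)) 0 t := fun t => by
    have h : HasDerivAt (fun t => w t * exp (-I t))
        (deriv w t * exp (-I t) + w t * (exp (-I t) * -(deriv w t / w t))) t :=
      (hw.differentiable one_ne_zero t).hasDerivAt.mul (hI t).neg.cexp
    convert h using 1
    field_simp [hw0 t]
    ring
  have := is_const_of_deriv_eq_zero (fun t => (hconst t).differentiableAt)
    (fun t => (hconst t).deriv) t 0
  simp only [I, intervalIntegral.integral_same, neg_zero, exp_zero, mul_one] at this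
  rw [← this, mul_assoc, ← exp_add, neg_add_cancel, exp_zero, mul_one]

theorem exists_integral_deriv_div_eq_int_mul (hw : ContDiff ℝ 1 w) (hw0 : ∀ t, w t ≠ 0)
    (hper : ∀ t, w (t + 1) = w t) :
    ∃ k : ℤ, ∫ s in (0 : ℝ)..1, deriv w s / w s = k * (2 * π * I) := by
  rw [← exp_eq_one_iff]
  apply mul_left_cancel₀ (hw0 0)
  rw [mul_exp_integral_deriv_div hw hw0, mul_one, ← zero_add 1, hper]

/-- A continuous determination of `arg (w t / c) / (2π)` along `w`. -/
noncomputable def argLift (w : ℝ → ℂ) (c : ℂ) (t : ℝ) : ℝ :=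
  ((∫ s in (0 : ℝ)..t, deriv w s / w s) + log (w 0 / c)).im / (2 * π)

theorem hasDerivAt_argLift (hw : ContDiff ℝ 1 w) (hw0 : ∀ t, w t ≠ 0) (c : ℂ) (t : ℝ) :
    HasDerivAt (argLift w c) ((deriv w t / w t).im / (2 * π)) t :=
  ((((continuous_deriv_div hw hw0).integral_hasStrictDerivAt 0 t).hasDerivAt.add_const
    _).complex_im).div_const _

theorem argLift_add_one (hw : ContDiff ℝ 1 w) (hw0 : ∀ t, w t ≠ 0)
    (hper : ∀ t, w (t + 1) = w t) {k : ℤ}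
    (hk : ∫ s in (0 : ℝ)..1, deriv w s / w s = k * (2 * π * I)) (c : ℂ) (t : ℝ) :
    argLift w c (t + 1) = argLift w c t + k := by
  have hperiodic : Function.Periodic (fun t => deriv w t / w t) 1 := fun t => by
    simp only [← deriv_comp_add_const, hper]
  have hturn : ((k : ℂ) * (2 * π * I)).im = k * (2 * π) := by simp
  rw [argLift, hperiodic.intervalIntegral_add_eq_add 0 t
    fun a b => (continuous_deriv_div hw hw0).intervalIntegrable a b, zero_add, hk, add_right_comm,
    add_im, hturn, add_div, mul_div_cancel_right₀ _ Real.two_pi_pos.ne', argLift]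

theorem exists_pos_eq_mul_iff_argLift (hw : ContDiff ℝ 1 w) (hw0 : ∀ t, w t ≠ 0) {c : ℂ}
    (hc : c ≠ 0) (t : ℝ) :
    (∃ s : ℝ, 0 < s ∧ w t = s * c) ↔ ∃ z : ℤ, argLift w c t = z := by
  have hexp : exp ((∫ s in (0 : ℝ)..t, deriv w s / w s) + log (w 0 / c)) = w t / c := by
    rw [exp_add, exp_log (div_ne_zero (hw0 0) hc), ← mul_exp_integral_deriv_div hw hw0 t]
    ring
  calc (∃ s : ℝ, 0 < s ∧ w t = s * c)
      ↔ ∃ s : ℝ, 0 < s ∧ exp ((∫ s in (0 : ℝ)..t, deriv w s / w s) + log (w 0 / c)) = s := by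
        simp only [hexp, div_eq_iff hc]
    _ ↔ _ := exists_pos_exp_eq_ofReal_iff _
    _ ↔ ∃ z : ℤ, argLift w c t = z := by
        simp only [argLift, div_eq_iff Real.two_pi_pos.ne']

theorem sign_deriv_argLift_of_eq_mul (hw : ContDiff ℝ 1 w) (hw0 : ∀ t, w t ≠ 0) {c : ℂ}
    {t s : ℝ} (hs : 0 < s) (hwt : w t = s * c) :
    Real.sign (deriv (argLift w c) t)
      = Real.sign (c.re * (deriv w t).im - c.im * (deriv w t).re) := by
  rw [(hasDerivAt_argLift hw hw0 c t).deriv, Real.sign_div_of_pos _ Real.two_pi_pos, hwt,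
    sign_im_div_ofReal_mul _ _ hs]

end LogDeriv

/-- The index of `p` with respect to a `C¹` loop `γ` equals the signed number of
transversal intersections of `γ` with the ray from `p` in direction `v`. -/
theorem index_eq_ray_crossings (γ : ℝ → ℂ) (hγ : ContDiff ℝ 1 γ)
    (hper : ∀ t, γ (t + 1) = γ t) (p : ℂ) (hp : ∀ t, γ t ≠ p)
    (v : ℂ) (hv : v ≠ 0)
    (hZ : {t ∈ Set.Ico (0:ℝ) 1 | ∃ s : ℝ, 0 < s ∧ γ t = p + (s : ℂ) * v}.Finite)
    (hreg : ∀ t ∈ {t ∈ Set.Ico (0:ℝ) 1 | ∃ s : ℝ, 0 < s ∧ γ t = p + (s : ℂ) * v},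
      v.re * (deriv γ t).im - v.im * (deriv γ t).re ≠ 0) :
    (1 / (2 * (Real.pi : ℂ) * Complex.I)) * (∫ t in (0:ℝ)..1, deriv γ t / (γ t - p))
      = ((∑ t ∈ hZ.toFinset,
          Real.sign (v.re * (deriv γ t).im - v.im * (deriv γ t).re) : ℝ) : ℂ) := by
  set w : ℝ → ℂ := fun t => γ t - p
  have hw : ContDiff ℝ 1 w := hγ.sub contDiff_const
  have hw0 : ∀ t, w t ≠ 0 := fun t => sub_ne_zero.2 (hp t)
  have hwper : ∀ t, w (t + 1) = w t := fun t => by simp only [w, hper]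
  have hdw : ∀ t, deriv w t = deriv γ t := fun t => deriv_sub_const p
  obtain ⟨k, hk⟩ := exists_integral_deriv_div_eq_int_mul hw hw0 hwper
  have hray : ∀ t, (∃ s : ℝ, 0 < s ∧ γ t = p + s * v) ↔ ∃ z : ℤ, argLift w v t = z := fun t => by
    simp only [← exists_pos_eq_mul_iff_argLift hw hw0 hv, w, sub_eq_iff_eq_add']
  have hsign : ∀ t ∈ hZ.toFinset, Real.sign (deriv (argLift w v) t)
      = Real.sign (v.re * (deriv γ t).im - v.im * (deriv γ t).re) := by
    intro t ht
    obtain ⟨-, s, hs, hγt⟩ := hZ.mem_toFinset.1 ht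
    rw [sign_deriv_argLift_of_eq_mul hw hw0 hs (by simp [w, hγt]), hdw]
  have hwind := intCast_eq_sum_sign_deriv
    (fun t => (hasDerivAt_argLift hw hw0 v t).differentiableAt)
    (argLift_add_one hw hw0 hwper hk v) hZ.toFinset
    (fun t => by rw [hZ.mem_toFinset, ← hray]; rfl)
    (fun t ht h0 => hreg t (hZ.mem_toFinset.1 ht)
      (Real.sign_eq_zero_iff.1 (by rw [← hsign t ht, h0, Real.sign_zero])))
  calc (1 / (2 * (π : ℂ) * I)) * (∫ t in (0 : ℝ)..1, deriv γ t / (γ t - p))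
      = k := by
        simp only [← hdw]
        rw [hk]
        field_simp
    _ = _ := by
        rw [← Finset.sum_congr rfl hsign, ← hwind, ofReal_intCast]
end

section
/- Let γ : ℝ → ℂ be a C² immersed loop and p ∈ ℂ with γ(t) ≠ p for all t. Define the tangency function g(t) := Im(conj(deriv γ t) · (γ(t) − p)), so g(t) = 0 exactly when the tangent line to γ at γ(t) passes through p. Suppose the set Z = {t ∈ [0,1) : g(t) = 0} is finite and deriv g t ≠ 0 for every t ∈ Z. For t ∈ Z define the sign of the corresponding tangent line by ε(t) := − sign(Re(conj(deriv γ t) · (γ(t) − p))) · sign(deriv g t). Then ∑_{t ∈ Z} ε(t) = 2·ind(γ) − 2·ind_p(γ). -/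
/-!
Write `γ' = exp L · (γ - p)`, where `L` is a primitive of `γ''/γ' - γ'/(γ - p)`. Then
`conj γ' · (γ - p) = h · exp (-iθ)` with `h > 0` and `θ = Im L` a continuous argument of
`γ'/(γ - p)`, which increases by `2πn` over one period, `n = ind(γ) - ind_p(γ)`. The tangent lines
through `p` occur exactly when `θ ∈ πℤ`, and there the sign `ε` equals the sign of `θ'`. So the sum
of the signs counts the crossings of the integers by `θ/π`, with orientation, over one period,
and this is the total increase `2n` of `θ/π`.
-/

open Filter Set Function Topology
open scoped Real

namespace Real

theorem sign_mul (x y : ℝ) : sign (x * y) = sign x * sign y := by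
  rcases lt_trichotomy x 0 with hx | hx | hx <;> rcases lt_trichotomy y 0 with hy | hy | hy <;>
    simp [sign_of_neg, sign_of_pos, hx, hy, mul_pos_of_neg_of_neg, mul_neg_of_neg_of_pos,
      mul_neg_of_pos_of_neg]

theorem neg_sign_mul_sign_neg_mul {c : ℝ} (hc : c ≠ 0) (x : ℝ) :
    -sign c * sign (-(c * x)) = sign x := by
  rw [sign_neg, sign_mul, neg_mul_neg, ← mul_assoc, ← sign_mul, sign_of_pos (mul_self_pos.2 hc),
    one_mul]

theorem sign_div_of_pos_s6 {a : ℝ} (ha : 0 < a) (x : ℝ) : sign (x / a) = sign x := by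
  rw [div_eq_mul_inv, sign_mul, sign_inv, sign_of_pos ha, mul_one]

end Real

section Floor

variable {R : Type*} [Ring R] [LinearOrder R] [IsStrictOrderedRing R] [FloorRing R]

theorem add_intCast_mem_range_intCast_iff {x : R} {k : ℤ} :
    x + k ∈ range ((↑) : ℤ → R) ↔ x ∈ range ((↑) : ℤ → R) := by
  rw [← Int.fract_eq_zero_iff, ← Int.fract_eq_zero_iff, Int.fract_add_intCast]

theorem notMem_range_intCast_of_mem_Ioo {x : R} {k : ℤ} (hx : x ∈ Ioo (k : R) (k + 1)) :
    x ∉ range ((↑) : ℤ → R) := by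
  rw [← Int.floor_lt_self_iff, Int.floor_eq_on_Ico k x (Ioo_subset_Ico_self hx)]
  exact hx.1

theorem exists_intCast_mem_uIcc_of_floor_ne {x y : R} (h : ⌊x⌋ ≠ ⌊y⌋) :
    ∃ k : ℤ, (k : R) ∈ uIcc x y := by
  wlog hxy : x ≤ y generalizing x y
  · obtain ⟨k, hk⟩ := this h.symm (le_of_not_ge hxy)
    exact ⟨k, uIcc_comm x y ▸ hk⟩
  have hlt : ⌊x⌋ < ⌊y⌋ := (Int.floor_mono hxy).lt_of_ne h
  refine ⟨⌊y⌋, Icc_subset_uIcc ⟨?_, Int.floor_le y⟩⟩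
  calc x ≤ ⌊x⌋ + 1 := (Int.lt_floor_add_one x).le
    _ ≤ ⌊y⌋ := by exact_mod_cast hlt

end Floor

theorem floor_eq_floor_of_continuousOn {φ : ℝ → ℝ} {x y : ℝ} (hxy : x ≤ y)
    (hφ : ContinuousOn φ (Icc x y)) (h : ∀ s ∈ Icc x y, φ s ∉ range ((↑) : ℤ → ℝ)) :
    ⌊φ x⌋ = ⌊φ y⌋ := by
  by_contra hne
  obtain ⟨k, hk⟩ := exists_intCast_mem_uIcc_of_floor_ne hne
  rw [← uIcc_of_le hxy] at hφ h
  obtain ⟨s, hs, hsk⟩ := intermediate_value_uIcc hφ hk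
  exact h s hs ⟨k, hsk.symm⟩

theorem HasDerivAt.eventually_nhdsLT_lt {f : ℝ → ℝ} {f' x : ℝ} (h : HasDerivAt f f' x)
    (hf' : 0 < f') : ∀ᶠ y in 𝓝[<] x, f y < f x := by
  have hslope : ∀ᶠ y in 𝓝[≠] x, 0 < slope f x y :=
    hasDerivAt_iff_tendsto_slope.1 h (lt_mem_nhds hf')
  filter_upwards [nhdsWithin_mono x (fun y hy => ne_of_lt hy) hslope, self_mem_nhdsWithin]
    with y hy hyx
  rw [slope_def_field] at hy
  have := (div_pos_iff.1 hy).resolve_left (fun h' => (sub_neg.2 hyx).not_gt h'.2)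
  linarith [this.1]

theorem HasDerivAt.eventually_nhdsGT_lt {f : ℝ → ℝ} {f' x : ℝ} (h : HasDerivAt f f' x)
    (hf' : 0 < f') : ∀ᶠ y in 𝓝[>] x, f x < f y := by
  have hslope : ∀ᶠ y in 𝓝[≠] x, 0 < slope f x y :=
    hasDerivAt_iff_tendsto_slope.1 h (lt_mem_nhds hf')
  filter_upwards [nhdsWithin_mono x (fun y hy => ne_of_gt hy) hslope, self_mem_nhdsWithin]
    with y hy hxy
  rw [slope_def_field] at hy
  have := (div_pos_iff.1 hy).resolve_right (fun h' => (sub_pos.2 hxy).not_gt h'.2)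
  linarith [this.1]

theorem HasDerivAt.exists_floor_jump {φ : ℝ → ℝ} {d t : ℝ} (h : HasDerivAt φ d t) (hd : d ≠ 0)
    {m : ℤ} (hm : φ t = m) :
    ∃ ℓ r : ℤ, ((r - ℓ : ℤ) : ℝ) = Real.sign d ∧ (∀ᶠ s in 𝓝[<] t, φ s ∈ Ioo (ℓ : ℝ) (ℓ + 1)) ∧
      ∀ᶠ s in 𝓝[>] t, φ s ∈ Ioo (r : ℝ) (r + 1) := by
  have hnear : ∀ᶠ s in 𝓝 t, φ s ∈ Ioo ((m : ℝ) - 1) (m + 1) :=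
    h.continuousAt.preimage_mem_nhds (hm ▸ Ioo_mem_nhds (by linarith) (by linarith))
  rcases hd.lt_or_gt with hd | hd
  · refine ⟨m, m - 1, by simp [Real.sign_of_neg hd], ?_, ?_⟩
    · filter_upwards [nhdsWithin_le_nhds hnear, h.neg.eventually_nhdsLT_lt (neg_pos.2 hd)]
        with s hs hlt
      simp only [Pi.neg_apply, neg_lt_neg_iff, hm] at hlt
      exact ⟨hlt, hs.2⟩
    · filter_upwards [nhdsWithin_le_nhds hnear, h.neg.eventually_nhdsGT_lt (neg_pos.2 hd)]
        with s hs hlt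
      simp only [Pi.neg_apply, neg_lt_neg_iff, hm] at hlt
      push_cast
      exact ⟨by linarith [hs.1], by linarith⟩
  · refine ⟨m - 1, m, by simp [Real.sign_of_pos hd], ?_, ?_⟩
    · filter_upwards [nhdsWithin_le_nhds hnear, h.eventually_nhdsLT_lt hd] with s hs hlt
      rw [hm] at hlt
      push_cast
      exact ⟨hs.1, by linarith⟩
    · filter_upwards [nhdsWithin_le_nhds hnear, h.eventually_nhdsGT_lt hd] with s hs hlt
      rw [hm] at hlt
      exact ⟨hlt, hs.2⟩

theorem Finset.mem_of_coe_eq_sep_Ioo {α : Type*} [PartialOrder α] {S : Finset α} {a b : α}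
    {p : α → Prop} (hS : (S : Set α) = {t ∈ Set.Ioo a b | p t}) (ha : ¬p a) (hb : ¬p b) {s : α}
    (hs : s ∈ Set.Icc a b) (hps : p s) : s ∈ S := by
  rcases eq_endpoints_or_mem_Ioo_of_mem_Icc hs with rfl | rfl | hs
  · exact absurd hps ha
  · exact absurd hps hb
  · exact hS.symm.subset ⟨hs, hps⟩

theorem Finset.coe_eq_sep_Ioo_of_coe_insert {α : Type*} [LinearOrder α] {S : Finset α}
    {a b c t₀ : α} {p : α → Prop}
    (hS : ((insert t₀ S : Finset α) : Set α) = {t ∈ Set.Ioo a b | p t})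
    (hSc : ∀ x ∈ S, x < c) (hct₀ : c < t₀) : (S : Set α) = {t ∈ Set.Ioo a c | p t} := by
  have ht₀ : t₀ ∈ Set.Ioo a b ∧ p t₀ := hS.subset (Finset.mem_insert_self t₀ S)
  ext x
  constructor
  · intro hx
    have hx' := hS.subset (Finset.mem_insert_of_mem hx)
    exact ⟨⟨hx'.1.1, hSc x hx⟩, hx'.2⟩
  · rintro ⟨hx, hpx⟩
    rcases Finset.mem_insert.1 (hS.symm.subset ⟨⟨hx.1, hx.2.trans (hct₀.trans ht₀.1.2)⟩, hpx⟩)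
      with rfl | hxS
    · exact absurd (hx.2.trans hct₀) (lt_irrefl _)
    · exact hxS

theorem sum_sign_deriv_eq_floor_sub_floor {φ : ℝ → ℝ} (hφ : Continuous φ) {a b : ℝ}
    (S : Finset ℝ) (hab : a ≤ b) (hS : (S : Set ℝ) = {t ∈ Ioo a b | φ t ∈ range ((↑) : ℤ → ℝ)})
    (hreg : ∀ t ∈ S, DifferentiableAt ℝ φ t ∧ deriv φ t ≠ 0)
    (ha : φ a ∉ range ((↑) : ℤ → ℝ)) (hb : φ b ∉ range ((↑) : ℤ → ℝ)) :
    ∑ t ∈ S, Real.sign (deriv φ t) = ((⌊φ b⌋ - ⌊φ a⌋ : ℤ) : ℝ) := by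
  classical
  induction S using Finset.induction_on_max generalizing b with
  | empty =>
    rw [Finset.sum_empty, floor_eq_floor_of_continuousOn hab hφ.continuousOn, sub_self,
      Int.cast_zero]
    exact fun s hs hsφ => Finset.notMem_empty s (Finset.mem_of_coe_eq_sep_Ioo hS ha hb hs hsφ)
  | insert t₀ S hlt ih =>
    have ht₀ : t₀ ∈ Ioo a b ∧ φ t₀ ∈ range ((↑) : ℤ → ℝ) := by
      simpa using hS.subset (Finset.mem_insert_self t₀ S)
    obtain ⟨m, hm⟩ := ht₀.2
    obtain ⟨hdiff, hd⟩ := hreg t₀ (Finset.mem_insert_self _ _)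
    obtain ⟨ℓ, r, hjump, hleft, hright⟩ := hdiff.hasDerivAt.exists_floor_jump hd hm.symm
    -- Take `c < t₀ < u` near the last crossing `t₀`: the induction hypothesis applies on
    -- `[a, c]`, `⌊φ⌋` is constant on `[u, b]`, and it jumps by `sign (φ' t₀)` from `c` to `u`.
    have hSlt : ∀ᶠ c in 𝓝[<] t₀, ∀ x ∈ S, x < c := (Finset.eventually_all S).2 fun x hx =>
      nhdsWithin_le_nhds (Ioi_mem_nhds (hlt x hx))
    obtain ⟨c, ⟨hcℓ, hSltc, hac⟩, hct₀⟩ := (hleft.and (hSlt.and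
      (nhdsWithin_le_nhds (Ioi_mem_nhds ht₀.1.1))) |>.and self_mem_nhdsWithin).exists
    obtain ⟨u, ⟨hur, hub⟩, ht₀u⟩ := (hright.and (nhdsWithin_le_nhds (Iio_mem_nhds ht₀.1.2))
      |>.and self_mem_nhdsWithin).exists
    have hub_floor : ⌊φ u⌋ = ⌊φ b⌋ := by
      refine floor_eq_floor_of_continuousOn hub.le hφ.continuousOn fun s hs hsφ => ?_
      have hus : t₀ < s := ht₀u.trans_le hs.1
      rcases Finset.mem_insert.1 (Finset.mem_of_coe_eq_sep_Ioo hS ha hb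
        ⟨ht₀.1.1.le.trans hus.le, hs.2⟩ hsφ) with rfl | hsS
      · exact hus.false
      · exact ((hlt s hsS).trans hus).false
    rw [Finset.sum_insert (fun h => (hlt t₀ h).false),
      ih hac.le (Finset.coe_eq_sep_Ioo_of_coe_insert hS hSltc hct₀)
      (fun t ht => hreg t (Finset.mem_insert_of_mem ht)) (notMem_range_intCast_of_mem_Ioo hcℓ),
      ← hub_floor, Int.floor_eq_on_Ico _ _ (Ioo_subset_Ico_self hcℓ),
      Int.floor_eq_on_Ico _ _ (Ioo_subset_Ico_self hur), ← hjump]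
    push_cast
    ring

theorem injOn_ite_lt_add_one (a : ℝ) :
    InjOn (fun t => if t < a then t + 1 else t) (Ico 0 1) := by
  intro x hx y hy hxy
  simp only [mem_Ico] at hx hy
  dsimp only at hxy
  split_ifs at hxy <;> linarith

theorem image_ite_lt_add_one_sep_Ico {P : ℝ → Prop} (hP : ∀ t, P (t + 1) ↔ P t) {a : ℝ}
    (ha : a ∈ Ico (0 : ℝ) 1) (hPa : ¬P a) :
    (fun t => if t < a then t + 1 else t) '' {t ∈ Ico 0 1 | P t} = {t ∈ Ioo a (a + 1) | P t} := by
  simp only [mem_Ico] at ha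
  ext s
  simp only [mem_image, mem_ofPred_eq, mem_Ico, mem_Ioo]
  constructor
  · rintro ⟨t, ⟨⟨ht₀, ht₁⟩, hPt⟩, rfl⟩
    split_ifs with hta
    · exact ⟨⟨by linarith, by linarith⟩, (hP t).2 hPt⟩
    · exact ⟨⟨lt_of_le_of_ne (not_lt.1 hta) fun h => hPa (h ▸ hPt), by linarith⟩, hPt⟩
  · rintro ⟨⟨has, hsa⟩, hPs⟩
    by_cases hs₁ : s < 1
    · exact ⟨s, ⟨⟨by linarith, hs₁⟩, hPs⟩, if_neg (not_lt.2 has.le)⟩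
    · refine ⟨s - 1, ⟨⟨by linarith, by linarith⟩, by rwa [← hP, sub_add_cancel]⟩, ?_⟩
      simp only [if_pos (show s - 1 < a by linarith), sub_add_cancel]

theorem sum_sign_deriv_eq_of_add_one {φ : ℝ → ℝ} {k : ℤ} (hφ : Differentiable ℝ φ)
    (hper : ∀ t, φ (t + 1) = φ t + k)
    (hZ : {t ∈ Ico (0 : ℝ) 1 | φ t ∈ range ((↑) : ℤ → ℝ)}.Finite)
    (hreg : ∀ t ∈ {t ∈ Ico (0 : ℝ) 1 | φ t ∈ range ((↑) : ℤ → ℝ)}, deriv φ t ≠ 0) :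
    ∑ t ∈ hZ.toFinset, Real.sign (deriv φ t) = k := by
  classical
  have hcross (t : ℝ) : φ (t + 1) ∈ range ((↑) : ℤ → ℝ) ↔ φ t ∈ range ((↑) : ℤ → ℝ) := by
    rw [hper, add_intCast_mem_range_intCast_iff]
  have hderiv : Periodic (deriv φ) 1 := fun t => by
    rw [← deriv_comp_add_const, funext hper, deriv_add_const]
  obtain ⟨a, haI, haZ⟩ := ((Ico_infinite (zero_lt_one' ℝ)).sdiff hZ).nonempty
  have ha : φ a ∉ range ((↑) : ℤ → ℝ) := fun h => haZ ⟨haI, h⟩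
  -- shifting the crossings before `a` by one period puts them all in `(a, a + 1)`
  set σ : ℝ → ℝ := fun t => if t < a then t + 1 else t
  have hσderiv (t : ℝ) : deriv φ (σ t) = deriv φ t := by
    simp only [σ]
    split_ifs
    exacts [hderiv t, rfl]
  calc ∑ t ∈ hZ.toFinset, Real.sign (deriv φ t)
      = ∑ s ∈ hZ.toFinset.image σ, Real.sign (deriv φ s) := by
        rw [Finset.sum_image ((injOn_ite_lt_add_one a).mono fun t ht =>
          (hZ.mem_toFinset.1 ht).1)]
        exact Finset.sum_congr rfl fun t _ => by rw [hσderiv]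
    _ = ((⌊φ (a + 1)⌋ - ⌊φ a⌋ : ℤ) : ℝ) := by
        refine sum_sign_deriv_eq_floor_sub_floor hφ.continuous _ (by linarith)
          (by rw [Finset.coe_image, hZ.coe_toFinset, image_ite_lt_add_one_sep_Ico hcross haI ha])
          (fun s hs => ⟨hφ s, ?_⟩) ha (by rwa [hcross])
        obtain ⟨t, ht, rfl⟩ := Finset.mem_image.1 hs
        rw [hσderiv]
        exact hreg t (hZ.mem_toFinset.1 ht)
    _ = k := by rw [hper, Int.floor_add_intCast, add_sub_cancel_left]

open Complex in
theorem exists_hasDerivAt_exp_eq {w q : ℝ → ℂ} (hq : Continuous q)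
    (hw : ∀ t, HasDerivAt w (q t * w t) t) (hw₀ : w 0 ≠ 0) :
    ∃ L : ℝ → ℂ, (∀ t, HasDerivAt L (q t) t) ∧ ∀ t, exp (L t) = w t := by
  set L : ℝ → ℂ := fun t => log (w 0) + ∫ s in (0 : ℝ)..t, q s
  have hL (t : ℝ) : HasDerivAt L (q t) t :=
    (hq.integral_hasStrictDerivAt 0 t).hasDerivAt.const_add _
  have hD (t : ℝ) : HasDerivAt (fun t => w t * exp (-L t)) 0 t :=
    ((hw t).mul (hL t).neg.cexp).congr_deriv (by ring)
  refine ⟨L, hL, fun t => ?_⟩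
  have hconst := is_const_of_deriv_eq_zero (fun t => (hD t).differentiableAt)
    (fun t => (hD t).deriv) t 0
  simp only [L, intervalIntegral.integral_same, add_zero, exp_neg, exp_log hw₀] at hconst
  rw [mul_inv_cancel₀ hw₀, mul_inv_eq_one₀ (exp_ne_zero _)] at hconst
  exact hconst.symm

open Complex in
theorem exists_int_add_one_eq_add_mul_two_pi_I {L q : ℝ → ℂ} (hL : ∀ t, HasDerivAt L (q t) t)
    (hq : Periodic q 1) (hexp : exp (L 1) = exp (L 0)) :
    ∃ n : ℤ, ∀ t, L (t + 1) = L t + n * (2 * π * I) := by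
  obtain ⟨n, hn⟩ := exp_eq_exp_iff_exists_int.1 hexp
  have hD (t : ℝ) : HasDerivAt (fun t => L (t + 1) - L t) 0 t := by
    have hD := ((hL (t + 1)).comp_add_const t 1).sub (hL t)
    rwa [hq t, sub_self] at hD
  refine ⟨n, fun t => ?_⟩
  have hconst := is_const_of_deriv_eq_zero (fun t => (hD t).differentiableAt)
    (fun t => (hD t).deriv) t 0
  rw [zero_add] at hconst
  linear_combination hconst + hn

theorem Function.Periodic.deriv {𝕜 F : Type*} [NontriviallyNormedField 𝕜] [NormedAddCommGroup F]
    [NormedSpace 𝕜 F] {f : 𝕜 → F} {c : 𝕜} (h : Periodic f c) : Periodic (deriv f) c :=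
  fun x => by rw [← deriv_comp_add_const, funext h]

open Complex in
theorem exists_deriv_eq_exp_mul_sub {γ : ℝ → ℂ} (hγ : ContDiff ℝ 2 γ) (hper : Periodic γ 1)
    (himm : ∀ t, deriv γ t ≠ 0) {p : ℂ} (hp : ∀ t, γ t ≠ p) :
    ∃ (L : ℝ → ℂ) (n : ℤ), Differentiable ℝ L ∧ (∀ t, deriv γ t = exp (L t) * (γ t - p)) ∧
      (∀ t, L (t + 1) = L t + n * (2 * π * I)) ∧
      (∫ t in (0 : ℝ)..1, deriv (deriv γ) t / deriv γ t) -
        (∫ t in (0 : ℝ)..1, deriv γ t / (γ t - p)) = n * (2 * π * I) := by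
  have hγ₁ : Differentiable ℝ γ := hγ.differentiable (by norm_num)
  have hγ₂ : Differentiable ℝ (deriv γ) := hγ.differentiable_deriv_two
  have hγ₂c : Continuous (deriv (deriv γ)) := (hγ.deriv' (n := 1)).continuous_deriv_one
  have hsub (t : ℝ) : γ t - p ≠ 0 := sub_ne_zero.2 (hp t)
  have hc₁ : Continuous fun t => deriv (deriv γ) t / deriv γ t := hγ₂c.div hγ₂.continuous himm
  have hc₂ : Continuous fun t => deriv γ t / (γ t - p) :=
    hγ₂.continuous.div (hγ₁.continuous.sub continuous_const) hsub
  set q : ℝ → ℂ := fun t => deriv (deriv γ) t / deriv γ t - deriv γ t / (γ t - p)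
  have hq : Continuous q := hc₁.sub hc₂
  have hw (t : ℝ) :
      HasDerivAt (fun t => deriv γ t / (γ t - p)) (q t * (deriv γ t / (γ t - p))) t :=
    ((hγ₂ t).hasDerivAt.div ((hγ₁ t).hasDerivAt.sub_const p) (hsub t)).congr_deriv <| by
      simp only [q]
      field_simp [himm t, hsub t]
  obtain ⟨L, hL, hexpL⟩ := exists_hasDerivAt_exp_eq hq hw (div_ne_zero (himm 0) (hsub 0))
  have hγ'per : Periodic (deriv γ) 1 := hper.deriv
  obtain ⟨n, hn⟩ := exists_int_add_one_eq_add_mul_two_pi_I hL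
    (fun t => by simp only [q, hγ'per t, hγ'per.deriv t, hper t])
    (by rw [hexpL, hexpL, ← zero_add 1, hγ'per 0, hper 0])
  refine ⟨L, n, fun t => (hL t).differentiableAt,
    fun t => by rw [hexpL, div_mul_cancel₀ _ (hsub t)], hn, ?_⟩
  rw [← intervalIntegral.integral_sub (hc₁.intervalIntegrable 0 1) (hc₂.intervalIntegrable 0 1)]
  change ∫ t in (0 : ℝ)..1, q t = _
  rw [intervalIntegral.integral_eq_sub_of_hasDerivAt (fun t _ => hL t) (hq.intervalIntegrable 0 1),
    ← zero_add 1, hn 0, add_sub_cancel_left]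

theorem re_star_exp_mul_mul_self (L z : ℂ) :
    (star (Complex.exp L * z) * z).re = ‖z‖ ^ 2 * Real.exp L.re * Real.cos L.im := by
  simp [Complex.mul_re, Complex.exp_re, Complex.exp_im, Complex.sq_norm, Complex.normSq_apply]
  ring

theorem im_star_exp_mul_mul_self (L z : ℂ) :
    (star (Complex.exp L * z) * z).im = -(‖z‖ ^ 2 * Real.exp L.re * Real.sin L.im) := by
  simp [Complex.mul_im, Complex.mul_re, Complex.exp_re, Complex.exp_im, Complex.sq_norm,
    Complex.normSq_apply]
  ring

theorem deriv_neg_mul_sin_of_sin_eq_zero {h θ : ℝ → ℝ} {t : ℝ} (hh : DifferentiableAt ℝ h t)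
    (hθ : DifferentiableAt ℝ θ t) (hsin : Real.sin (θ t) = 0) :
    deriv (fun s => -(h s * Real.sin (θ s))) t = -(h t * Real.cos (θ t) * deriv θ t) := by
  have hd : HasDerivAt (fun s => -(h s * Real.sin (θ s))) _ t :=
    (hh.hasDerivAt.mul hθ.hasDerivAt.sin).neg
  rw [hd.deriv, hsin]
  ring

theorem Real.sin_eq_zero_iff_div_pi_mem_range {x : ℝ} :
    Real.sin x = 0 ↔ x / π ∈ range ((↑) : ℤ → ℝ) := by
  simp only [Real.sin_eq_zero_iff, mem_range, eq_div_iff Real.pi_ne_zero]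

theorem neg_sign_mul_sign_deriv_neg_mul_sin {h θ : ℝ → ℝ} {t : ℝ} (hh : DifferentiableAt ℝ h t)
    (hθ : DifferentiableAt ℝ θ t) (hpos : 0 < h t) (hsin : Real.sin (θ t) = 0) :
    -Real.sign (h t * Real.cos (θ t)) * Real.sign (deriv (fun s => -(h s * Real.sin (θ s))) t) =
        Real.sign (deriv θ t) ∧
      (deriv (fun s => -(h s * Real.sin (θ s))) t ≠ 0 → deriv θ t ≠ 0) := by
  have hc : h t * Real.cos (θ t) ≠ 0 := by
    refine mul_ne_zero hpos.ne' ?_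
    rcases Real.sin_eq_zero_iff_cos_eq.1 hsin with hcos | hcos <;> simp [hcos]
  rw [deriv_neg_mul_sin_of_sin_eq_zero hh hθ hsin]
  refine ⟨Real.neg_sign_mul_sign_neg_mul hc _, fun hne h0 => hne ?_⟩
  rw [h0, mul_zero, neg_zero]

open Complex in
theorem exists_polar_form_star_deriv_mul_sub {γ : ℝ → ℂ} (hγ : ContDiff ℝ 2 γ)
    (hper : Periodic γ 1) (himm : ∀ t, deriv γ t ≠ 0) {p : ℂ} (hp : ∀ t, γ t ≠ p) :
    ∃ (h θ : ℝ → ℝ) (n : ℤ), Differentiable ℝ h ∧ Differentiable ℝ θ ∧ (∀ t, 0 < h t) ∧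
      (∀ t, (star (deriv γ t) * (γ t - p)).re = h t * Real.cos (θ t)) ∧
      (∀ t, (star (deriv γ t) * (γ t - p)).im = -(h t * Real.sin (θ t))) ∧
      (∀ t, θ (t + 1) = θ t + 2 * π * n) ∧
      (∫ t in (0 : ℝ)..1, deriv (deriv γ) t / deriv γ t) -
        (∫ t in (0 : ℝ)..1, deriv γ t / (γ t - p)) = n * (2 * π * I) := by
  obtain ⟨L, n, hL, hγL, hLper, hint⟩ := exists_deriv_eq_exp_mul_sub hγ hper himm hp
  refine ⟨fun t => ‖γ t - p‖ ^ 2 * Real.exp (L t).re, fun t => (L t).im, n,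
    fun t => ?_, imCLM.differentiable.comp hL, fun t => ?_,
    fun t => by rw [hγL, re_star_exp_mul_mul_self], fun t => by rw [hγL, im_star_exp_mul_mul_self],
    fun t => by simp [hLper]; ring, hint⟩
  · exact ((hγ.differentiable (by norm_num) t).sub_const p).norm_sq ℝ |>.mul
      (reCLM.differentiable.comp hL t).exp
  · have := sub_ne_zero.2 (hp t)
    positivity

/-- The toy model (degree 1) formula: the algebraic number of lines through `p`
tangent to the oriented immersed curve `γ` equals `2·ind(γ) − 2·ind_p(γ)`. -/
theorem lines_through_point_tangent_count (γ : ℝ → ℂ) (hγ : ContDiff ℝ 2 γ)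
    (hper : ∀ t, γ (t + 1) = γ t) (himm : ∀ t, deriv γ t ≠ 0)
    (p : ℂ) (hp : ∀ t, γ t ≠ p)
    (g : ℝ → ℝ) (hg : g = fun t => (star (deriv γ t) * (γ t - p)).im)
    (hZ : {t ∈ Set.Ico (0:ℝ) 1 | g t = 0}.Finite)
    (hreg : ∀ t ∈ {t ∈ Set.Ico (0:ℝ) 1 | g t = 0}, deriv g t ≠ 0) :
    ((∑ t ∈ hZ.toFinset,
        -Real.sign ((star (deriv γ t) * (γ t - p)).re) * Real.sign (deriv g t) : ℝ) : ℂ)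
      = 2 * ((1 / (2 * (Real.pi : ℂ) * Complex.I)) *
            ∫ t in (0:ℝ)..1, deriv (deriv γ) t / deriv γ t)
        - 2 * ((1 / (2 * (Real.pi : ℂ) * Complex.I)) *
            ∫ t in (0:ℝ)..1, deriv γ t / (γ t - p)) := by
  obtain ⟨h, θ, n, hh, hθ, hpos, hre, him, hθper, hint⟩ :=
    exists_polar_form_star_deriv_mul_sub hγ hper himm hp
  have hg' : g = fun t => -(h t * Real.sin (θ t)) := hg.trans (funext him)
  have hzero (t : ℝ) : g t = 0 ↔ θ t / π ∈ range ((↑) : ℤ → ℝ) := by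
    rw [hg', neg_eq_zero, mul_eq_zero, or_iff_right (hpos t).ne',
      Real.sin_eq_zero_iff_div_pi_mem_range]
  have hsign (t : ℝ) (ht : g t = 0) :
      -Real.sign ((star (deriv γ t) * (γ t - p)).re) * Real.sign (deriv g t) =
        Real.sign (deriv (fun s => θ s / π) t) ∧
      (deriv g t ≠ 0 → deriv (fun s => θ s / π) t ≠ 0) := by
    rw [hre, hg', deriv_div_const, Real.sign_div_of_pos_s6 Real.pi_pos, div_ne_zero_iff,
      and_iff_left Real.pi_ne_zero]
    exact neg_sign_mul_sign_deriv_neg_mul_sin (hh t) (hθ t) (hpos t)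
      (Real.sin_eq_zero_iff_div_pi_mem_range.2 ((hzero t).1 ht))
  have hset : {t ∈ Ico (0 : ℝ) 1 | g t = 0} = {t ∈ Ico (0 : ℝ) 1 | θ t / π ∈ range ((↑) : ℤ → ℝ)} :=
    by simp only [hzero]
  have hcount := sum_sign_deriv_eq_of_add_one (k := 2 * n) (hθ.div_const π)
    (fun t => by rw [hθper]; push_cast; field_simp) (hset ▸ hZ)
    fun t ht => (hsign t ((hzero t).2 ht.2)).2 (hreg t (hset ▸ ht))
  have hsum : ∑ t ∈ hZ.toFinset,
      -Real.sign ((star (deriv γ t) * (γ t - p)).re) * Real.sign (deriv g t) = ((2 * n : ℤ) : ℝ) :=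
    hcount ▸ Finset.sum_congr (Set.Finite.toFinset_inj.2 hset)
      fun t ht => (hsign t ((hzero t).2 (Set.Finite.mem_toFinset _ |>.1 ht).2)).1
  rw [hsum, ← mul_sub, ← mul_sub, hint]
  field_simp
  push_cast
  ring
end

section
/- Let γ : ℝ → ℂ be a C¹ loop and let p, q ∈ ℂ with γ(t) ≠ p and γ(t) ≠ q for all t, p ≠ q. Suppose the set Z = {t ∈ [0,1) : γ(t) = q + s·(p − q) for some real s with 0 < s < 1} is finite and for every t ∈ Z one has det(q − p, deriv γ t) ≠ 0, where det(a,b) := a.re·b.im − a.im·b.re. Then ind_p(γ) − ind_q(γ) = ∑_{t ∈ Z} sign(det(q − p, deriv γ t)). -/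
/-!
Put `f = (γ - p) / (γ - q)`, so that `f' / f = γ' / (γ - p) - γ' / (γ - q)` and the left-hand
side is the winding number of the loop `f` around `0`. A point `γ t` lies on the open segment
from `q` to `p` exactly when `f t` is a negative real number. Integrating `f' / f` from a base
point gives a continuous branch `θ` of `arg ∘ f`, and the crossings are the times where
`(θ - π) / 2π` is an integer. Each transversal crossing changes `⌊(θ - π) / 2π⌋` by the sign of
`θ' = Im (f' / f)`, which at a crossing is a positive multiple of `det (q - p, γ')`; over one
period the floor changes by the winding number.
-/

open Set Filter Topology Complex Function
open scoped Real

namespace Real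

theorem sign_mul_of_pos {c : ℝ} (hc : 0 < c) (x : ℝ) : sign (c * x) = sign x := by
  rcases lt_trichotomy x 0 with hx | rfl | hx
  · rw [sign_of_neg hx, sign_of_neg (mul_neg_of_pos_of_neg hc hx)]
  · rw [mul_zero]
  · rw [sign_of_pos hx, sign_of_pos (mul_pos hc hx)]

end Real

theorem floor_eq_floor_of_forall_ne_intCast {φ : ℝ → ℝ} {u v : ℝ} (huv : u ≤ v)
    (hφ : ContinuousOn φ (Icc u v)) (h : ∀ t ∈ Icc u v, ∀ m : ℤ, φ t ≠ m) :
    ⌊φ u⌋ = ⌊φ v⌋ := by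
  refine isPreconnected_Icc.constant (f := fun t => ⌊φ t⌋) (fun t ht => ?_)
    ⟨le_rfl, huv⟩ ⟨huv, le_rfl⟩
  have hfloor : ∀ᶠ y in 𝓝 (φ t), ⌊y⌋ = ⌊φ t⌋ := by
    have hlt : (⌊φ t⌋ : ℝ) < φ t := (Int.floor_le _).lt_of_ne (h t ht _).symm
    filter_upwards [Ioo_mem_nhds hlt (Int.lt_floor_add_one _)] with y hy
    exact Int.floor_eq_iff.2 ⟨hy.1.le, hy.2⟩
  exact (tendsto_pure.2 ((hφ t ht).eventually hfloor)).mono_right (pure_le_nhds _)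

theorem HasDerivAt.exists_floor_sub_floor_eq_sign {φ : ℝ → ℝ} {d t₀ l u : ℝ} {m : ℤ}
    (hφ : HasDerivAt φ d t₀) (hm : φ t₀ = m) (hd : d ≠ 0) (hl : l < t₀) (hu : t₀ < u) :
    ∃ c' ∈ Ioo l t₀, ∃ c ∈ Ioo t₀ u, ((⌊φ c⌋ - ⌊φ c'⌋ : ℤ) : ℝ) = Real.sign d := by
  -- `d` times the slope of `φ` at `t₀` tends to `d ^ 2 > 0`, so `φ - m` has the sign of
  -- `d * (t - t₀)` near `t₀`.
  have hslope : ∀ᶠ t in 𝓝[≠] t₀, 0 < d * ((φ t - m) / (t - t₀)) := by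
    filter_upwards [((hasDerivAt_iff_tendsto_slope.1 hφ).const_mul d).eventually
      (lt_mem_nhds (mul_self_pos.2 hd))] with t ht
    rwa [slope_def_field, hm] at ht
  have hnear : ∀ᶠ t in 𝓝 t₀, φ t ∈ Ioo ((m : ℝ) - 1) (m + 1) :=
    hφ.continuousAt.eventually_mem (Ioo_mem_nhds (by linarith) (by linarith))
  obtain ⟨c', hc'slope, hc'near, hc'⟩ := ((hslope.filter_mono (nhdsLT_le_nhdsNE t₀)).and
    ((hnear.filter_mono nhdsWithin_le_nhds).and (Ioo_mem_nhdsLT hl))).exists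
  obtain ⟨c, hcslope, hcnear, hc⟩ := ((hslope.filter_mono (nhdsGT_le_nhdsNE t₀)).and
    ((hnear.filter_mono nhdsWithin_le_nhds).and (Ioo_mem_nhdsGT hu))).exists
  have hc'sign : d * (φ c' - m) < 0 := by
    have := mul_neg_of_pos_of_neg hc'slope (sub_neg.2 hc'.2)
    rwa [mul_assoc, div_mul_cancel₀ _ (sub_neg.2 hc'.2).ne] at this
  have hcsign : 0 < d * (φ c - m) := by
    have := mul_pos hcslope (sub_pos.2 hc.1)
    rwa [mul_assoc, div_mul_cancel₀ _ (sub_pos.2 hc.1).ne'] at this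
  refine ⟨c', hc', c, hc, ?_⟩
  rcases hd.lt_or_gt with hd | hd
  · have hfc : ⌊φ c⌋ = m - 1 := Int.floor_eq_iff.2 ⟨by push_cast; linarith [hcnear.1],
      by push_cast; nlinarith⟩
    have hfc' : ⌊φ c'⌋ = m := Int.floor_eq_iff.2 ⟨by nlinarith, hc'near.2⟩
    rw [hfc, hfc', Real.sign_of_neg hd]
    push_cast; ring
  · have hfc : ⌊φ c⌋ = m := Int.floor_eq_iff.2 ⟨by nlinarith, hcnear.2⟩
    have hfc' : ⌊φ c'⌋ = m - 1 := Int.floor_eq_iff.2 ⟨by push_cast; linarith [hc'near.1],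
      by push_cast; nlinarith⟩
    rw [hfc, hfc', Real.sign_of_pos hd]
    push_cast; ring

theorem floor_sub_floor_eq_sum_sign {φ φ' : ℝ → ℝ} {a b : ℝ} (hab : a ≤ b)
    (hφ : ∀ t ∈ Icc a b, HasDerivAt φ (φ' t) t) (T : Finset ℝ)
    (hT : ∀ t ∈ Icc a b, (∃ m : ℤ, φ t = m) ↔ t ∈ T) (hTab : ∀ t ∈ T, t ∈ Ioo a b)
    (hφ' : ∀ t ∈ T, φ' t ≠ 0) :
    ((⌊φ b⌋ - ⌊φ a⌋ : ℤ) : ℝ) = ∑ t ∈ T, Real.sign (φ' t) := by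
  induction T using Finset.induction_on_max generalizing b with
  | empty =>
    rw [floor_eq_floor_of_forall_ne_intCast hab
      (fun t ht => (hφ t ht).continuousAt.continuousWithinAt)
      fun t ht m hm => by simpa using (hT t ht).1 ⟨m, hm⟩]
    simp
  | insert t₀ s hs ih =>
    have ht₀ := hTab t₀ (Finset.mem_insert_self _ _)
    obtain ⟨m, hm⟩ := (hT t₀ (Ioo_subset_Icc_self ht₀)).2 (Finset.mem_insert_self _ _)
    obtain ⟨l, hlt₀, hal, hsl⟩ : ∃ l < t₀, a ≤ l ∧ ∀ x ∈ s, x ≤ l :=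
      ⟨(insert a s).max' (Finset.insert_nonempty a s),
        (Finset.max'_lt_iff _ _).2 fun x hx => by
          rcases Finset.mem_insert.1 hx with rfl | hx
          exacts [ht₀.1, hs x hx],
        Finset.le_max' _ _ (Finset.mem_insert_self a s),
        fun x hx => Finset.le_max' _ _ (Finset.mem_insert_of_mem hx)⟩
    obtain ⟨c', hc', c, hc, hjump⟩ :=
      (hφ t₀ (Ioo_subset_Icc_self ht₀)).exists_floor_sub_floor_eq_sign
        hm (hφ' t₀ (Finset.mem_insert_self _ _)) hlt₀ ht₀.2
    have hleft : ((⌊φ c'⌋ - ⌊φ a⌋ : ℤ) : ℝ) = ∑ t ∈ s, Real.sign (φ' t) := by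
      have hsub : Icc a c' ⊆ Icc a b := Icc_subset_Icc_right (by linarith [hc'.2, ht₀.2])
      refine ih (by linarith [hc'.1]) (fun t ht => hφ t (hsub ht)) (fun t ht => ?_)
        (fun x hx => ⟨(hTab x (Finset.mem_insert_of_mem hx)).1, (hsl x hx).trans_lt hc'.1⟩)
        (fun x hx => hφ' x (Finset.mem_insert_of_mem hx))
      rw [hT t (hsub ht), Finset.mem_insert, or_iff_right]
      exact (ht.2.trans_lt hc'.2).ne
    have hright : ⌊φ c⌋ = ⌊φ b⌋ := by
      have hsub : Icc c b ⊆ Icc a b := Icc_subset_Icc_left (by linarith [hc.1, ht₀.1])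
      refine floor_eq_floor_of_forall_ne_intCast hc.2.le
        (fun t ht => (hφ t (hsub ht)).continuousAt.continuousWithinAt) fun t ht m hm => ?_
      rcases Finset.mem_insert.1 ((hT t (hsub ht)).1 ⟨m, hm⟩) with rfl | hts
      · linarith [ht.1, hc.1]
      · linarith [hs t hts, ht.1, hc.1]
    rw [Finset.sum_insert fun h => (hs t₀ h).false, ← hleft, ← hjump, hright]
    push_cast; ring

theorem eq_mul_exp_integral_of_hasDerivAt {f ℓ : ℝ → ℂ} (hf : ∀ t, HasDerivAt f (f t * ℓ t) t)
    (hℓ : Continuous ℓ) (a t : ℝ) : f t = f a * exp (∫ s in a..t, ℓ s) := by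
  set F : ℝ → ℂ := fun t => ∫ s in a..t, ℓ s
  have hconst : ∀ u, HasDerivAt (fun w => f w * exp (-F w)) 0 u := fun u =>
    ((hf u).mul (hℓ.integral_hasStrictDerivAt a u).hasDerivAt.neg.cexp).congr_deriv (by ring)
  have h := is_const_of_deriv_eq_zero (fun u => (hconst u).differentiableAt)
    (fun u => (hconst u).deriv) t a
  simp only [F, intervalIntegral.integral_same, neg_zero, exp_zero, mul_one] at h
  rw [← h, mul_assoc, ← exp_add, neg_add_cancel, exp_zero, mul_one]

theorem arg_mul_exp_eq_pi_iff {z : ℂ} (hz : z ≠ 0) (w : ℂ) :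
    arg (z * exp w) = π ↔ ∃ m : ℤ, (2 * π)⁻¹ * (arg z + w.im - π) = m := by
  have hpolar : z * exp w = ↑(‖z‖ * Real.exp w.re) * exp (↑(arg z + w.im) * I) := by
    conv_lhs => rw [← norm_mul_exp_arg_mul_I z, ← re_add_im w]
    push_cast
    rw [exp_add, add_mul, exp_add]
    ring
  rw [hpolar, arg_real_mul _ (by positivity), arg_exp_mul_I, toIocMod_eq_iff]
  simp only [zsmul_eq_mul]
  constructor
  · rintro ⟨-, m, hm⟩
    exact ⟨m, by rw [hm]; field_simp; ring⟩
  · rintro ⟨m, hm⟩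
    refine ⟨⟨by linarith [Real.pi_pos], by linarith⟩, m, ?_⟩
    rw [inv_mul_eq_iff_eq_mul₀ (by positivity)] at hm
    linarith

theorem integral_eq_two_pi_I_mul_sum_sign_of_eq {f ℓ : ℝ → ℂ}
    (hf : ∀ t, HasDerivAt f (f t * ℓ t) t) (hℓ : Continuous ℓ) {a b : ℝ} (hab : a ≤ b)
    (hfa : f a ≠ 0) (hfb : f b = f a)
    (ha : arg (f a) ≠ π) (T : Finset ℝ) (hT : (T : Set ℝ) = {t ∈ Ico a b | arg (f t) = π})
    (hTℓ : ∀ t ∈ T, (ℓ t).im ≠ 0) :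
    ∫ t in a..b, ℓ t = 2 * π * I * ((∑ t ∈ T, Real.sign (ℓ t).im : ℝ) : ℂ) := by
  set F : ℝ → ℂ := fun t => ∫ s in a..t, ℓ s
  have hfF := eq_mul_exp_integral_of_hasDerivAt hf hℓ a
  obtain ⟨k, hk⟩ : ∃ k : ℤ, F b = k * (2 * π * I) :=
    exp_eq_one_iff.1 (mul_left_cancel₀ hfa (by rw [mul_one, ← hfF b, hfb]))
  -- `2π φ + π` is a continuous branch of `arg ∘ f`
  set φ : ℝ → ℝ := fun t => (2 * π)⁻¹ * (arg (f a) + (F t).im - π)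
  have hφ : ∀ t, HasDerivAt φ ((2 * π)⁻¹ * (ℓ t).im) t := fun t =>
    (((imCLM.hasFDerivAt.comp_hasDerivAt t
      (hℓ.integral_hasStrictDerivAt a t).hasDerivAt).const_add _).sub_const π).const_mul _
  have hcross : ∀ t, arg (f t) = π ↔ ∃ m : ℤ, φ t = m := fun t => by
    rw [hfF t]; exact arg_mul_exp_eq_pi_iff hfa _
  have hFa : F a = 0 := intervalIntegral.integral_same
  have hFb : (F b).im = k * (2 * π) := by simp [hk]
  have hφb : φ b = φ a + k := by
    simp only [φ, hFa, hFb, zero_im]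
    field_simp
    ring
  have hcount := floor_sub_floor_eq_sum_sign hab (fun t _ => hφ t) T
    (fun t ht => by
      rw [← hcross, ← Finset.mem_coe, hT, mem_sep_iff, and_iff_right_of_imp]
      refine fun h => ⟨ht.1, ht.2.lt_of_ne ?_⟩
      rintro rfl
      exact ha (hfb ▸ h))
    (fun t ht => by
      rw [← Finset.mem_coe, hT] at ht
      exact ⟨ht.1.1.lt_of_ne (by rintro rfl; exact ha ht.2), ht.1.2⟩)
    (fun t ht => mul_ne_zero (by positivity) (hTℓ t ht))
  rw [hφb, Int.floor_add_intCast, add_sub_cancel_left] at hcount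
  simp only [Real.sign_mul_of_pos (inv_pos.2 Real.two_pi_pos)] at hcount
  change F b = _
  rw [hk, ← hcount]
  push_cast
  ring

section Periodic

variable {α : Type*} [AddCommGroup α] [LinearOrder α] [IsOrderedAddMonoid α] [Archimedean α]
  {c : α} (hc : 0 < c)

theorem Function.Periodic.toIcoMod_apply {β : Type*} {g : α → β} (hg : Periodic g c) (a x : α) :
    g (toIcoMod hc a x) = g x := by
  rw [← self_sub_toIcoDiv_zsmul, hg.sub_zsmul_eq]

theorem Function.Periodic.image_toIcoMod_sep_Ico {P : α → Prop} (hP : Periodic P c) (a b : α) :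
    toIcoMod hc b '' {t ∈ Ico a (a + c) | P t} = {t ∈ Ico b (b + c) | P t} := by
  ext y
  constructor
  · rintro ⟨x, ⟨-, hx⟩, rfl⟩
    exact ⟨toIcoMod_mem_Ico hc b x, (hP.toIcoMod_apply hc b x).symm ▸ hx⟩
  · rintro ⟨hy, hPy⟩
    refine ⟨toIcoMod hc a y, ⟨toIcoMod_mem_Ico hc a y, (hP.toIcoMod_apply hc a y).symm ▸ hPy⟩, ?_⟩
    rw [toIcoMod_toIcoMod, toIcoMod_eq_self]
    exact hy

theorem injOn_toIcoMod (a b : α) : InjOn (toIcoMod hc b) (Ico a (a + c)) :=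
  fun x hx y hy hxy => by
    rw [← (toIcoMod_eq_self hc).2 hx, ← (toIcoMod_eq_self hc).2 hy]
    exact (toIcoMod_inj hc).2 ((toIcoMod_inj hc).1 hxy)

end Periodic

theorem Function.Periodic.of_hasDerivAt_mul {f ℓ : ℝ → ℂ} {c : ℝ} (hper : Periodic f c)
    (hf : ∀ t, HasDerivAt f (f t * ℓ t) t) (hf₀ : ∀ t, f t ≠ 0) : Periodic ℓ c := fun t => by
  have h := ((hf (t + c)).comp_add_const t c)
  rw [hper.funext, hper t] at h
  exact mul_left_cancel₀ (hf₀ t) (h.unique (hf t))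

theorem Function.Periodic.integral_eq_two_pi_I_mul_sum_sign {f ℓ : ℝ → ℂ} {c : ℝ} (hc : 0 < c)
    (hper : Periodic f c) (hf : ∀ t, HasDerivAt f (f t * ℓ t) t) (hℓ : Continuous ℓ)
    (hf₀ : ∀ t, f t ≠ 0) (T : Finset ℝ) (hT : (T : Set ℝ) = {t ∈ Ico 0 c | arg (f t) = π})
    (hTℓ : ∀ t ∈ T, (ℓ t).im ≠ 0) :
    ∫ t in 0..c, ℓ t = 2 * π * I * ((∑ t ∈ T, Real.sign (ℓ t).im : ℝ) : ℂ) := by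
  have hℓper := hper.of_hasDerivAt_mul hf hf₀
  -- a base point off the crossing set, so that neither end of `[a, a + c]` is a crossing
  obtain ⟨a, ha, haT⟩ := ((Ico_infinite hc).sdiff T.finite_toSet).nonempty
  have harg : arg (f a) ≠ π := fun h => haT (hT ▸ ⟨ha, h⟩)
  have hTc : (T : Set ℝ) ⊆ Ico 0 (0 + c) := by rw [hT, zero_add]; exact sep_subset _ _
  have hTa : ((T.image (toIcoMod hc a) : Finset ℝ) : Set ℝ) =
      {t ∈ Ico a (a + c) | arg (f t) = π} := by
    have hP : Periodic (fun t => arg (f t) = π) c := fun t => by simp only [hper t]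
    rw [Finset.coe_image, ← hP.image_toIcoMod_sep_Ico hc 0 a, zero_add, hT]
  calc ∫ t in 0..c, ℓ t = ∫ t in a..a + c, ℓ t := by
        simpa using hℓper.intervalIntegral_add_eq 0 a
    _ = 2 * π * I * ((∑ t ∈ T.image (toIcoMod hc a), Real.sign (ℓ t).im : ℝ) : ℂ) := by
        refine integral_eq_two_pi_I_mul_sum_sign_of_eq hf hℓ (by linarith) (hf₀ a) (hper a)
          harg _ hTa ?_
        simp only [Finset.mem_image, forall_exists_index, and_imp, forall_apply_eq_imp_iff₂,
          hℓper.toIcoMod_apply]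
        exact hTℓ
    _ = _ := by
        rw [Finset.sum_image ((injOn_toIcoMod hc 0 a).mono hTc)]
        simp only [hℓper.toIcoMod_apply]

theorem exists_mem_segment_iff_arg_div_eq_pi {p q w : ℂ} (hpq : p ≠ q) :
    (∃ s : ℝ, 0 < s ∧ s < 1 ∧ w = q + s * (p - q)) ↔ arg ((w - p) / (w - q)) = π := by
  constructor
  · rintro ⟨s, hs0, hs1, rfl⟩
    have hs : (s : ℂ) ≠ 0 := ofReal_ne_zero.2 hs0.ne'
    have h : (q + s * (p - q) - p) / (q + s * (p - q) - q) = ((s - 1) / s : ℝ) := by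
      push_cast; field_simp; ring
    rw [h]
    exact arg_ofReal_of_neg (div_neg_of_neg_of_pos (by linarith) hs0)
  · intro h
    obtain ⟨hre, him⟩ := arg_eq_pi_iff.1 h
    set r := ((w - p) / (w - q)).re
    have hwq : w - q ≠ 0 := fun h0 => by simp [r, h0] at hre
    have hr : w - p = r * (w - q) := by
      rw [← div_eq_iff hwq]; exact ext rfl (by simpa using him)
    have h1r : (0 : ℝ) < 1 - r := by linarith
    have h1r' : (1 : ℂ) - r ≠ 0 := by exact_mod_cast h1r.ne'
    refine ⟨(1 - r)⁻¹, inv_pos.2 h1r, inv_lt_one_of_one_lt₀ (by linarith), ?_⟩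
    push_cast
    field_simp
    linear_combination hr

theorem sign_im_div_sub_div_eq_sign_det {p q w : ℂ} (hpq : p ≠ q)
    (hw : ∃ s : ℝ, 0 < s ∧ s < 1 ∧ w = q + s * (p - q)) (v : ℂ) :
    Real.sign (v / (w - p) - v / (w - q)).im =
      Real.sign ((q - p).re * v.im - (q - p).im * v.re) := by
  obtain ⟨s, hs0, hs1, rfl⟩ := hw
  have hpq' : p - q ≠ 0 := sub_ne_zero.2 hpq
  have hs : (s : ℂ) ≠ 0 := ofReal_ne_zero.2 hs0.ne'
  have hs1ne : s - 1 ≠ 0 := (sub_neg.2 hs1).ne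
  have h1s : 1 - s ≠ 0 := (sub_pos.2 hs1).ne'
  have hs1C : (s : ℂ) - 1 ≠ 0 := by exact_mod_cast hs1ne
  have hN : 0 < normSq (p - q) := normSq_pos.2 hpq'
  have h : (v / (q + s * (p - q) - p) - v / (q + s * (p - q) - q)).im =
      (s * (1 - s) * normSq (p - q))⁻¹ * ((q - p).re * v.im - (q - p).im * v.re) := by
    have h' : v / (q + s * (p - q) - p) - v / (q + s * (p - q) - q) =
        ((s * (s - 1))⁻¹ : ℝ) * (v / (p - q)) := by
      rw [show q + s * (p - q) - p = (s - 1) * (p - q) by ring,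
        show q + s * (p - q) - q = s * (p - q) by ring]
      push_cast; field_simp; ring
    rw [h', im_ofReal_mul, div_im]
    simp only [sub_re, sub_im]
    field_simp
    ring
  rw [h, Real.sign_mul_of_pos (inv_pos.2 (mul_pos (mul_pos hs0 (sub_pos.2 hs1)) hN))]

/-- The jump formula: the difference of indices `ind_p(γ) − ind_q(γ)` equals the signed
number of transversal intersections of `γ` with the open segment from `q` to `p`. -/
theorem index_jump_formula (γ : ℝ → ℂ) (hγ : ContDiff ℝ 1 γ)
    (hper : ∀ t, γ (t + 1) = γ t) (p q : ℂ)
    (hp : ∀ t, γ t ≠ p) (hq : ∀ t, γ t ≠ q) (hpq : p ≠ q)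
    (hZ : {t ∈ Set.Ico (0:ℝ) 1 |
        ∃ s : ℝ, 0 < s ∧ s < 1 ∧ γ t = q + (s : ℂ) * (p - q)}.Finite)
    (hreg : ∀ t ∈ {t ∈ Set.Ico (0:ℝ) 1 |
        ∃ s : ℝ, 0 < s ∧ s < 1 ∧ γ t = q + (s : ℂ) * (p - q)},
      (q - p).re * (deriv γ t).im - (q - p).im * (deriv γ t).re ≠ 0) :
    (1 / (2 * (Real.pi : ℂ) * Complex.I)) * (∫ t in (0:ℝ)..1, deriv γ t / (γ t - p))
      - (1 / (2 * (Real.pi : ℂ) * Complex.I)) *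
          (∫ t in (0:ℝ)..1, deriv γ t / (γ t - q))
      = ((∑ t ∈ hZ.toFinset,
          Real.sign ((q - p).re * (deriv γ t).im - (q - p).im * (deriv γ t).re) : ℝ) : ℂ) := by
  have hγp : ∀ t, γ t - p ≠ 0 := fun t => sub_ne_zero.2 (hp t)
  have hγq : ∀ t, γ t - q ≠ 0 := fun t => sub_ne_zero.2 (hq t)
  have hcont : ∀ z, (∀ t, γ t - z ≠ 0) → Continuous fun t => deriv γ t / (γ t - z) :=
    fun z hz => (hγ.continuous_deriv le_rfl).div (hγ.continuous.sub continuous_const) hz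
  have hf : ∀ t, HasDerivAt (fun t => (γ t - p) / (γ t - q))
      ((γ t - p) / (γ t - q) * (deriv γ t / (γ t - p) - deriv γ t / (γ t - q))) t := fun t => by
    have hd := ((hγ.differentiable one_ne_zero) t).hasDerivAt
    refine ((hd.sub_const p).div (hd.sub_const q) (hγq t)).congr_deriv ?_
    field_simp [hγp t, hγq t]
  have hsign : ∀ t ∈ hZ.toFinset, Real.sign (deriv γ t / (γ t - p) - deriv γ t / (γ t - q)).im =
      Real.sign ((q - p).re * (deriv γ t).im - (q - p).im * (deriv γ t).re) := fun t ht =>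
    sign_im_div_sub_div_eq_sign_det hpq (hZ.mem_toFinset.1 ht).2 _
  have key := Periodic.integral_eq_two_pi_I_mul_sum_sign one_pos
    (fun t => by simp only [hper]) hf ((hcont p hγp).sub (hcont q hγq))
    (fun t => div_ne_zero (hγp t) (hγq t)) hZ.toFinset
    (by ext t; simp [exists_mem_segment_iff_arg_div_eq_pi hpq])
    (fun t ht h0 => hreg t (hZ.mem_toFinset.1 ht)
      (by rw [← Real.sign_eq_zero_iff, ← hsign t ht, h0, Real.sign_zero]))
  rw [← mul_sub, ← intervalIntegral.integral_sub ((hcont p hγp).intervalIntegrable _ _)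
    ((hcont q hγq).intervalIntegrable _ _), key, Finset.sum_congr rfl hsign, one_div,
    inv_mul_cancel_left₀ (by simp [Real.pi_ne_zero])]
end

section
/- Let p ∈ ℂ and let γ₀, γ₁ : ℝ → ℂ be C² immersed loops avoiding p that are regularly homotopic in ℂ ∖ {p}: there is a continuous H : ℝ × [0,1] → ℂ with H(t+1, s) = H(t, s), H(t, s) ≠ p for all t, s, each H(·, s) continuously differentiable in t with ∂H/∂t(t, s) ≠ 0, the map (t, s) ↦ ∂H/∂t(t, s) continuous, H(·, 0) = γ₀ and H(·, 1) = γ₁. For j = 0, 1 define g_j(t) := Im(conj(deriv γ_j t) · (γ_j(t) − p)) and assume the set Z_j = {t ∈ [0,1) : g_j(t) = 0} is finite with deriv g_j t ≠ 0 for all t ∈ Z_j, and set N₁(p, γ_j) := ∑_{t ∈ Z_j} (− sign(Re(conj(deriv γ_j t) · (γ_j(t) − p))) · sign(deriv g_j t)). Then N₁(p, γ₀) = N₁(p, γ₁). -/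
/-!
Put `f = conj γ' · (γ - p)`, so that the tangency function is `g = Im f`. If `L` is a continuous
logarithm of `f` and `θ = Im L`, then `g` vanishes exactly where `θ` crosses `πℤ`, and the sign of
such a crossing is `sign (cos θ) · sign g' = -ε`. Over one period the signed count of tangent
lines is therefore `-(⌊θ(a+1)/π⌋ - ⌊θ(a)/π⌋) = -2w`, where `w` is the winding number of `f`
around `0`. Along a regular homotopy in `ℂ ∖ {p}` the function `f` stays continuous and
nonvanishing, so `w` does not change.
-/

open Set Filter Topology Complex
open scoped Real

theorem Real.sign_mul_s13 (x y : ℝ) : Real.sign (x * y) = Real.sign x * Real.sign y := by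
  rcases lt_trichotomy x 0 with hx | rfl | hx <;> rcases lt_trichotomy y 0 with hy | rfl | hy <;>
    simp [Real.sign_of_neg, Real.sign_of_pos, mul_pos_of_neg_of_neg, mul_neg_of_pos_of_neg,
      mul_neg_of_neg_of_pos, *]

theorem Real.sign_exp_mul (x y : ℝ) : Real.sign (Real.exp x * y) = Real.sign y := by
  rw [Real.sign_mul_s13, Real.sign_of_pos (Real.exp_pos x), one_mul]

theorem Complex.sign_exp_re (z : ℂ) : Real.sign (exp z).re = Real.sign (Real.cos z.im) := by
  rw [Complex.exp_re, Real.sign_exp_mul]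

theorem Complex.sign_exp_im (z : ℂ) : Real.sign (exp z).im = Real.sign (Real.sin z.im) := by
  rw [Complex.exp_im, Real.sign_exp_mul]

theorem Real.sign_sin_of_abs_lt_pi {y : ℝ} (hy : |y| < π) :
    Real.sign (Real.sin y) = Real.sign y := by
  obtain ⟨h₁, h₂⟩ := abs_lt.1 hy
  rcases lt_trichotomy y 0 with h | rfl | h
  · rw [Real.sign_of_neg h, Real.sign_of_neg (Real.sin_neg_of_neg_of_neg_pi_lt h h₁)]
  · simp
  · rw [Real.sign_of_pos h, Real.sign_of_pos (Real.sin_pos_of_pos_of_lt_pi h h₂)]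

theorem HasDerivAt.eventually_sign_eq {g : ℝ → ℝ} {g' τ : ℝ} (hg : HasDerivAt g g' τ)
    (hτ : g τ = 0) (hg' : g' ≠ 0) :
    ∀ᶠ t in 𝓝[≠] τ, Real.sign (g t) = Real.sign g' * Real.sign (t - τ) := by
  have hslope := hasDerivAt_iff_tendsto_slope.1 hg
  have hsign : ∀ᶠ t in 𝓝[≠] τ, Real.sign (slope g τ t) = Real.sign g' := by
    rcases hg'.lt_or_gt with h | h
    · filter_upwards [hslope.eventually (gt_mem_nhds h)] with t ht
      rw [Real.sign_of_neg ht, Real.sign_of_neg h]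
    · filter_upwards [hslope.eventually (lt_mem_nhds h)] with t ht
      rw [Real.sign_of_pos ht, Real.sign_of_pos h]
  filter_upwards [hsign, self_mem_nhdsWithin] with t ht htτ
  rw [← ht, ← Real.sign_mul_s13, slope_def_field, hτ, sub_zero,
    div_mul_cancel₀ _ (sub_ne_zero.2 htτ)]

theorem Int.floor_eq_floor_of_forall_ne_intCast {u : ℝ → ℝ} {c d : ℝ} (hcd : c ≤ d)
    (hu : ContinuousOn u (Icc c d)) (hint : ∀ t ∈ Icc c d, ∀ k : ℤ, u t ≠ k) :
    ⌊u d⌋ = ⌊u c⌋ := by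
  by_contra hne
  -- the larger of the two floors is an integer value between `u c` and `u d`
  have hk : ((max ⌊u c⌋ ⌊u d⌋ : ℤ) : ℝ) ∈ uIcc (u c) (u d) := by
    have hc := Int.lt_floor_add_one (u c)
    have hd := Int.lt_floor_add_one (u d)
    rcases lt_or_gt_of_ne hne with h | h
    · have h' : (⌊u d⌋ : ℝ) + 1 ≤ ⌊u c⌋ := by exact_mod_cast h
      rw [max_eq_left h.le]
      exact mem_uIcc.2 (Or.inr ⟨by linarith, Int.floor_le _⟩)
    · have h' : (⌊u c⌋ : ℝ) + 1 ≤ ⌊u d⌋ := by exact_mod_cast h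
      rw [max_eq_right h.le]
      exact mem_uIcc.2 (Or.inl ⟨by linarith, Int.floor_le _⟩)
  rw [← uIcc_of_le hcd] at hu hint
  obtain ⟨t, ht, hkt⟩ := intermediate_value_uIcc hu hk
  exact hint t ht _ hkt

theorem Finset.exists_between_of_forall_lt {α : Type*} [LinearOrder α] [DenselyOrdered α]
    {s : Finset α} {c τ : α} (hcτ : c < τ) (hs : ∀ x ∈ s, x < τ) :
    ∃ e, c < e ∧ (∀ x ∈ s, x < e) ∧ e < τ := by
  obtain ⟨e, he₁, he₂⟩ := _root_.exists_between <|
    ((insert c s).max'_lt_iff (insert_nonempty c s)).2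
      fun y hy => (mem_insert.1 hy).elim (fun h => h ▸ hcτ) (hs y)
  exact ⟨e, ((insert c s).le_max' c (mem_insert_self c s)).trans_lt he₁,
    fun x hx => ((insert c s).le_max' x (mem_insert_of_mem hx)).trans_lt he₁, he₂⟩

section Band

variable {θ g : ℝ → ℝ}

theorem floor_div_pi_eq_of_sin_ne_zero {c d : ℝ} (hcd : c ≤ d) (hθ : ContinuousOn θ (Icc c d))
    (hsin : ∀ t ∈ Icc c d, Real.sin (θ t) ≠ 0) : ⌊θ d / π⌋ = ⌊θ c / π⌋ :=
  Int.floor_eq_floor_of_forall_ne_intCast hcd (hθ.div_const π) fun t ht k hk =>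
    hsin t ht (by rw [(div_eq_iff Real.pi_ne_zero).1 hk, Real.sin_int_mul_pi])

theorem sign_cos_mul_sign_sin_eq {q : ℤ} {x : ℝ} (hx : |x - q * π| < π) :
    Real.sign (Real.cos (q * π)) * Real.sign (Real.sin x) = Real.sign (x - q * π) := by
  have hsin : Real.sin x = (-1) ^ q * Real.sin (x - q * π) := by
    rw [← Real.sin_add_int_mul_pi, sub_add_cancel]
  have hunit : Real.sign ((-1 : ℝ) ^ q) * Real.sign ((-1 : ℝ) ^ q) = 1 := by
    rcases Real.sign_apply_eq_of_ne_zero _ (zpow_ne_zero q (by norm_num : (-1 : ℝ) ≠ 0))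
      with h | h <;> rw [h] <;> norm_num
  rw [Real.cos_int_mul_pi, hsin, Real.sign_mul_s13, ← mul_assoc, hunit, one_mul,
    Real.sign_sin_of_abs_lt_pi hx]

theorem two_mul_floor_div_pi_eq {q : ℤ} {x : ℝ} (hx : |x - q * π| < π)
    (hsin : Real.sin x ≠ 0) :
    2 * (⌊x / π⌋ : ℝ) = 2 * q - 1 + Real.sign (Real.cos (q * π)) * Real.sign (Real.sin x) := by
  rw [sign_cos_mul_sign_sin_eq hx]
  obtain ⟨h₁, h₂⟩ := abs_lt.1 hx
  have hπ := Real.pi_pos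
  rcases lt_or_gt_of_ne (show x ≠ q * π by rintro rfl; exact hsin (Real.sin_int_mul_pi q))
    with h | h
  · have hfloor : ⌊x / π⌋ = q - 1 := by
      rw [Int.floor_eq_iff, le_div_iff₀ hπ, div_lt_iff₀ hπ]
      push_cast
      constructor <;> linarith
    rw [hfloor, Real.sign_of_neg (by linarith)]
    push_cast
    ring
  · have hfloor : ⌊x / π⌋ = q := by
      rw [Int.floor_eq_iff, le_div_iff₀ hπ, div_lt_iff₀ hπ]
      constructor <;> linarith
    rw [hfloor, Real.sign_of_pos (by linarith)]
    ring

theorem floor_div_pi_sub_eq_of_unique_zero {c τ d g' : ℝ} (hθ : Continuous θ)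
    (hsign : ∀ t, Real.sign (g t) = Real.sign (Real.sin (θ t)))
    (hcτ : c < τ) (hτd : τ < d) (hzero : ∀ t ∈ Icc c d, g t = 0 ↔ t = τ)
    (hg : HasDerivAt g g' τ) (hg' : g' ≠ 0) :
    ((⌊θ d / π⌋ - ⌊θ c / π⌋ : ℤ) : ℝ) = Real.sign (Real.cos (θ τ)) * Real.sign g' := by
  have hsin_ne : ∀ t, g t ≠ 0 → Real.sin (θ t) ≠ 0 := fun t ht h =>
    ht (Real.sign_eq_zero_iff.1 (by rw [hsign, h, Real.sign_zero]))
  have hgτ : g τ = 0 := (hzero τ ⟨hcτ.le, hτd.le⟩).2 rfl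
  obtain ⟨q, hq⟩ : ∃ q : ℤ, (q : ℝ) * π = θ τ := Real.sin_eq_zero_iff.1 <| by
    rw [← Real.sign_eq_zero_iff, ← hsign, hgτ, Real.sign_zero]
  have hnear : ∀ᶠ t in 𝓝[≠] τ, 2 * (⌊θ t / π⌋ : ℝ) =
      2 * q - 1 + Real.sign (Real.cos (θ τ)) * Real.sign g' * Real.sign (t - τ) := by
    have hclose : ∀ᶠ t in 𝓝[≠] τ, |θ t - q * π| < π := by
      rw [hq]
      exact nhdsWithin_le_nhds <| hθ.continuousAt.eventually
        (Metric.ball_mem_nhds (θ τ) Real.pi_pos)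
    filter_upwards [hclose, hg.eventually_sign_eq hgτ hg', hg.eventually_ne (c := 0) hg']
      with t hθt hgt hne
    rw [two_mul_floor_div_pi_eq hθt (hsin_ne t hne), ← hsign, hgt, hq]
    ring
  obtain ⟨t₁, h₁, hct₁, ht₁τ⟩ :=
    ((hnear.filter_mono (nhdsLT_le_nhdsNE τ)).and (Ioo_mem_nhdsLT hcτ)).exists
  obtain ⟨t₂, h₂, hτt₂, ht₂d⟩ :=
    ((hnear.filter_mono (nhdsGT_le_nhdsNE τ)).and (Ioo_mem_nhdsGT hτd)).exists
  have hfree : ∀ t ∈ Icc c d, t ≠ τ → Real.sin (θ t) ≠ 0 := fun t ht htτ =>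
    hsin_ne t fun h => htτ ((hzero t ht).1 h)
  have hk₁ := floor_div_pi_eq_of_sin_ne_zero hct₁.le hθ.continuousOn fun t ht =>
    hfree t ⟨ht.1, ht.2.trans (ht₁τ.trans hτd).le⟩ (ht.2.trans_lt ht₁τ).ne
  have hk₂ := floor_div_pi_eq_of_sin_ne_zero ht₂d.le hθ.continuousOn fun t ht =>
    hfree t ⟨(hcτ.trans hτt₂).le.trans ht.1, ht.2⟩ (hτt₂.trans_le ht.1).ne'
  rw [Real.sign_of_neg (sub_neg.2 ht₁τ)] at h₁
  rw [Real.sign_of_pos (sub_pos.2 hτt₂)] at h₂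
  push_cast
  rw [← hk₁, hk₂]
  linarith

theorem sum_sign_cos_mul_sign_deriv_eq_floor_sub {c d : ℝ} (hθ : Continuous θ)
    (hsign : ∀ t, Real.sign (g t) = Real.sign (Real.sin (θ t))) (hcd : c ≤ d)
    (hc : g c ≠ 0) (hd : g d ≠ 0) (Z : Finset ℝ) (hZ : ∀ t, t ∈ Z ↔ t ∈ Icc c d ∧ g t = 0)
    (hreg : ∀ t ∈ Z, deriv g t ≠ 0) :
    ∑ τ ∈ Z, Real.sign (Real.cos (θ τ)) * Real.sign (deriv g τ)
      = ((⌊θ d / π⌋ - ⌊θ c / π⌋ : ℤ) : ℝ) := by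
  classical
  induction Z using Finset.induction_on_max generalizing d with
  | empty =>
    have hsin : ∀ t ∈ Icc c d, Real.sin (θ t) ≠ 0 := fun t ht h =>
      Finset.notMem_empty t <| (hZ t).2
        ⟨ht, by rw [← Real.sign_eq_zero_iff, hsign, h, Real.sign_zero]⟩
    rw [Finset.sum_empty, floor_div_pi_eq_of_sin_ne_zero hcd hθ.continuousOn hsin, sub_self,
      Int.cast_zero]
  | insert τ s hsτ ih =>
    obtain ⟨⟨hcτ, hτd⟩, hgτ⟩ := (hZ τ).1 (Finset.mem_insert_self τ s)
    replace hcτ : c < τ := hcτ.lt_of_ne (by rintro rfl; exact hc hgτ)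
    replace hτd : τ < d := hτd.lt_of_ne (by rintro rfl; exact hd hgτ)
    obtain ⟨e, hce, hse, heτ⟩ := s.exists_between_of_forall_lt hcτ hsτ
    have hZs : ∀ t, t ∈ s ↔ t ∈ Icc c e ∧ g t = 0 := by
      intro t
      constructor
      · intro ht
        obtain ⟨⟨hct, -⟩, hgt⟩ := (hZ t).1 (Finset.mem_insert_of_mem ht)
        exact ⟨⟨hct, (hse t ht).le⟩, hgt⟩
      · rintro ⟨⟨hct, hte⟩, hgt⟩
        have htZ := (hZ t).2 ⟨⟨hct, hte.trans (heτ.trans hτd).le⟩, hgt⟩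
        exact (Finset.mem_insert.1 htZ).resolve_left fun h => (hte.trans_lt (h ▸ heτ)).false
    have hge : g e ≠ 0 := fun h => (hse e ((hZs e).2 ⟨⟨hce.le, le_rfl⟩, h⟩)).false
    have hτonly : ∀ t ∈ Icc e d, g t = 0 ↔ t = τ := fun t ht => by
      refine ⟨fun h => ?_, fun h => h ▸ hgτ⟩
      have htZ := (hZ t).2 ⟨⟨(hce.trans_le ht.1).le, ht.2⟩, h⟩
      exact (Finset.mem_insert.1 htZ).resolve_right fun hts => (hse t hts).not_ge ht.1
    have hregτ := hreg τ (Finset.mem_insert_self τ s)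
    rw [Finset.sum_insert fun h => (hsτ τ h).false,
      ih hce.le hge hZs fun t ht => hreg t (Finset.mem_insert_of_mem ht),
      ← floor_div_pi_sub_eq_of_unique_zero hθ hsign heτ hτd hτonly
        (differentiableAt_of_deriv_ne_zero hregτ).hasDerivAt hregτ]
    push_cast
    ring

end Band

section Periodic

variable {α β M : Type*} [AddCommGroup α] [LinearOrder α] [IsOrderedAddMonoid α] [Archimedean α]
  {p : α}

theorem Function.Periodic.apply_toIcoMod {f : α → β} (hf : Function.Periodic f p) (hp : 0 < p)
    (a t : α) :
    f (toIcoMod hp a t) = f t := by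
  rw [← self_sub_toIcoDiv_zsmul, hf.sub_zsmul_eq]

theorem Function.Periodic.mem_image_toIcoMod_iff [Zero β] [DecidableEq α] {g : α → β}
    (hg : Function.Periodic g p) (hp : 0 < p) {a b : α} {Z : Finset α}
    (hZ : ∀ t, t ∈ Z ↔ t ∈ Ico b (b + p) ∧ g t = 0) (t : α) :
    t ∈ Z.image (toIcoMod hp a) ↔ t ∈ Ico a (a + p) ∧ g t = 0 := by
  simp only [Finset.mem_image, hZ]
  constructor
  · rintro ⟨z, ⟨-, hz⟩, rfl⟩
    exact ⟨toIcoMod_mem_Ico hp a z, by rw [hg.apply_toIcoMod, hz]⟩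
  · rintro ⟨ht, hgt⟩
    exact ⟨toIcoMod hp b t, ⟨toIcoMod_mem_Ico hp b t, by rw [hg.apply_toIcoMod, hgt]⟩,
      by rw [toIcoMod_toIcoMod, (toIcoMod_eq_self hp).2 ht]⟩

theorem Function.Periodic.sum_image_toIcoMod [AddCommMonoid M] [DecidableEq α] {T : α → M}
    (hT : Function.Periodic T p) (hp : 0 < p) {a b : α} {Z : Finset α}
    (hZ : ∀ t ∈ Z, t ∈ Ico b (b + p)) :
    ∑ t ∈ Z.image (toIcoMod hp a), T t = ∑ t ∈ Z, T t := by
  rw [Finset.sum_image fun x hx y hy hxy => ?_]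
  · exact Finset.sum_congr rfl fun t _ => hT.apply_toIcoMod hp a t
  · rw [← (toIcoMod_eq_self hp).2 (hZ x hx), ← (toIcoMod_eq_self hp).2 (hZ y hy),
      ← toIcoMod_toIcoMod hp b a x, hxy, toIcoMod_toIcoMod]

theorem Function.Periodic.exists_finset_Icc_sum_eq [Zero β] [AddCommMonoid M] [DecidableEq α]
    {g : α → β} (hg : Function.Periodic g p) {T : α → M} (hT : Function.Periodic T p)
    (hp : 0 < p) {a b : α}
    (ha : g a ≠ 0) {Z : Finset α} (hZ : ∀ t, t ∈ Z ↔ t ∈ Ico b (b + p) ∧ g t = 0) :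
    ∃ Z' : Finset α, (∀ t, t ∈ Z' ↔ t ∈ Icc a (a + p) ∧ g t = 0) ∧
      ∑ t ∈ Z', T t = ∑ t ∈ Z, T t := by
  refine ⟨Z.image (toIcoMod hp a), fun t => ?_,
    hT.sum_image_toIcoMod hp fun t ht => ((hZ t).1 ht).1⟩
  rw [hg.mem_image_toIcoMod_iff hp hZ]
  refine ⟨fun h => ⟨Ico_subset_Icc_self h.1, h.2⟩, fun ⟨ht, hgt⟩ => ⟨⟨ht.1, ht.2.lt_of_ne ?_⟩, hgt⟩⟩
  rintro rfl
  exact ha (by rwa [hg] at hgt)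

end Periodic

theorem sum_neg_sign_re_mul_sign_deriv_eq_neg_two_mul {f L : ℝ → ℂ} {g : ℝ → ℝ} {n : ℤ}
    (hL : Continuous L) (hf : ∀ t, exp (L t) = f t)
    (hLper : ∀ t, L (t + 1) = L t + n * (2 * π * I)) (hg : ∀ t, g t = (f t).im)
    (hZ : {t ∈ Ico (0 : ℝ) 1 | g t = 0}.Finite)
    (hreg : ∀ t ∈ {t ∈ Ico (0 : ℝ) 1 | g t = 0}, deriv g t ≠ 0) :
    ∑ t ∈ hZ.toFinset, -Real.sign ((f t).re) * Real.sign (deriv g t) = -(2 * n) := by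
  classical
  set θ : ℝ → ℝ := fun t => (L t).im
  have hfper : Function.Periodic f 1 := fun t => by
    rw [← hf, ← hf, hLper, Complex.exp_add, Complex.exp_int_mul_two_pi_mul_I, mul_one]
  have hgper : Function.Periodic g 1 := fun t => by rw [hg, hg, hfper]
  have hg'per : Function.Periodic (deriv g) 1 := fun t => by
    rw [← deriv_comp_add_const, hgper.funext]
  have hT : Function.Periodic (fun t => Real.sign ((f t).re) * Real.sign (deriv g t)) 1 :=
    fun t => by simp only [hfper t, hg'per t]
  obtain ⟨a, ha, hga⟩ := ((Ico_infinite one_pos).sdiff hZ).nonempty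
  replace hga : g a ≠ 0 := fun h => hga ⟨ha, h⟩
  obtain ⟨Z, hZa, hsum⟩ := hgper.exists_finset_Icc_sum_eq hT one_pos hga (b := 0)
    (Z := hZ.toFinset) fun t => by simp
  have hreg' : ∀ t ∈ Z, deriv g t ≠ 0 := fun t ht => by
    obtain ⟨-, hgt⟩ := (hZa t).1 ht
    rw [← hg'per.apply_toIcoMod one_pos 0]
    refine hreg _ ⟨by simpa using toIcoMod_mem_Ico one_pos 0 t, ?_⟩
    rwa [hgper.apply_toIcoMod]
  have hθ : θ (a + 1) / π = θ a / π + ((2 * n : ℤ) : ℝ) := by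
    have : θ (a + 1) = θ a + n * (2 * π) := by simp [θ, hLper]
    rw [this, add_div, mul_div_assoc, mul_div_cancel_right₀ _ Real.pi_ne_zero]
    push_cast
    ring
  calc ∑ t ∈ hZ.toFinset, -Real.sign ((f t).re) * Real.sign (deriv g t)
      = -∑ t ∈ Z, Real.sign (Real.cos (θ t)) * Real.sign (deriv g t) := by
        simp only [neg_mul, Finset.sum_neg_distrib]
        rw [← hsum]
        simp only [← hf, Complex.sign_exp_re, θ]
    _ = -((⌊θ (a + 1) / π⌋ - ⌊θ a / π⌋ : ℤ) : ℝ) := by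
        rw [sum_sign_cos_mul_sign_deriv_eq_floor_sub (by fun_prop)
          (fun t => by rw [hg, ← hf, Complex.sign_exp_im]) (by linarith) hga
          (by rwa [hgper]) Z hZa hreg']
    _ = -(2 * n) := by
        rw [hθ, Int.floor_add_intCast]
        push_cast
        ring

theorem exists_continuous_exp_eq {X : Type*} [TopologicalSpace X] [SimplyConnectedSpace X]
    [LocallyPathConnectedSpace X] (f : C(X, ℂ)) (hf : ∀ x, f x ≠ 0) :
    ∃ L : C(X, ℂ), ∀ x, exp (L x) = f x := by
  obtain ⟨x₀⟩ : Nonempty X := inferInstance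
  obtain ⟨L, ⟨-, hL⟩, -⟩ := Complex.isCoveringMapOn_exp.existsUnique_continuousMap_lifts f
    (a₀ := x₀) (Complex.exp_log (hf x₀)) hf
  exact ⟨L, congrFun hL⟩

theorem exists_int_forall_eq_int_mul_two_pi_I {X : Type*} [TopologicalSpace X]
    [PreconnectedSpace X] {D : X → ℂ} (hD : Continuous D) (hexp : ∀ x, exp (D x) = 1) :
    ∃ n : ℤ, ∀ x, D x = n * (2 * π * I) := by
  rcases isEmpty_or_nonempty X with hX | ⟨⟨x₀⟩⟩
  · exact ⟨0, hX.elim⟩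
  have hmem : ∀ x, D x ∈ AddSubgroup.zmultiples (2 * π * I) := fun x => by
    obtain ⟨n, hn⟩ := Complex.exp_eq_one_iff.1 (hexp x)
    exact AddSubgroup.mem_zmultiples_iff.2 ⟨n, by rw [hn, zsmul_eq_mul]⟩
  obtain ⟨n, hn⟩ := Complex.exp_eq_one_iff.1 (hexp x₀)
  refine ⟨n, fun x => ?_⟩
  rw [← hn]
  exact congrArg Subtype.val
    (PreconnectedSpace.constant ‹_› (hD.subtype_mk hmem) (x := x) (y := x₀))

theorem exists_exp_lift_add_int_mul_two_pi_I {F : ℝ × ℝ → ℂ} (hF : Continuous F)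
    (h0 : ∀ q, F q ≠ 0) (hper : ∀ t s, F (t + 1, s) = F (t, s)) :
    ∃ (L : ℝ × ℝ → ℂ) (n : ℤ), Continuous L ∧ (∀ q, exp (L q) = F q) ∧
      ∀ t s, L (t + 1, s) = L (t, s) + n * (2 * π * I) := by
  obtain ⟨L, hL⟩ := exists_continuous_exp_eq ⟨F, hF⟩ h0
  obtain ⟨n, hn⟩ := exists_int_forall_eq_int_mul_two_pi_I
    (D := fun q : ℝ × ℝ => L (q.1 + 1, q.2) - L q) (by fun_prop) fun q => by
      simp only [Complex.exp_sub, hL, ContinuousMap.coe_mk, hper, div_self (h0 q)]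
  exact ⟨L, n, L.continuous, hL, fun t s => by rw [← hn (t, s)]; ring⟩

theorem tangent_lines_count_regular_homotopy_invariant_general (p : ℂ)
    (γ₀ γ₁ : ℝ → ℂ)
    (H : ℝ → ℝ → ℂ)
    (hcont : ContinuousOn (fun q : ℝ × ℝ => H q.1 q.2) (Set.univ ×ˢ Set.Icc 0 1))
    (hHper : ∀ t : ℝ, ∀ s ∈ Set.Icc (0:ℝ) 1, H (t + 1) s = H t s)
    (hHne : ∀ t : ℝ, ∀ s ∈ Set.Icc (0:ℝ) 1, H t s ≠ p)
    (hHimm : ∀ t : ℝ, ∀ s ∈ Set.Icc (0:ℝ) 1, deriv (fun t' => H t' s) t ≠ 0)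
    (hderivcont : ContinuousOn (fun q : ℝ × ℝ => deriv (fun t' => H t' q.2) q.1)
      (Set.univ ×ˢ Set.Icc 0 1))
    (hH₀ : ∀ t, H t 0 = γ₀ t) (hH₁ : ∀ t, H t 1 = γ₁ t)
    (g₀ g₁ : ℝ → ℝ)
    (hg₀ : g₀ = fun t => (star (deriv γ₀ t) * (γ₀ t - p)).im)
    (hg₁ : g₁ = fun t => (star (deriv γ₁ t) * (γ₁ t - p)).im)
    (hZ₀ : {t ∈ Set.Ico (0:ℝ) 1 | g₀ t = 0}.Finite)
    (hZ₁ : {t ∈ Set.Ico (0:ℝ) 1 | g₁ t = 0}.Finite)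
    (hreg₀ : ∀ t ∈ {t ∈ Set.Ico (0:ℝ) 1 | g₀ t = 0}, deriv g₀ t ≠ 0)
    (hreg₁ : ∀ t ∈ {t ∈ Set.Ico (0:ℝ) 1 | g₁ t = 0}, deriv g₁ t ≠ 0) :
    ∑ t ∈ hZ₀.toFinset,
        -Real.sign ((star (deriv γ₀ t) * (γ₀ t - p)).re) * Real.sign (deriv g₀ t)
      = ∑ t ∈ hZ₁.toFinset,
          -Real.sign ((star (deriv γ₁ t) * (γ₁ t - p)).re) * Real.sign (deriv g₁ t) := by
  -- Clamping `s` to `[0, 1]` extends the homotopy to the simply connected plane `ℝ × ℝ`.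
  set σ : ℝ → ℝ := fun s => projIcc 0 1 zero_le_one s
  have hσ : ∀ s, σ s ∈ Icc (0 : ℝ) 1 := fun s => Subtype.mem _
  set F : ℝ × ℝ → ℂ := fun q => star (deriv (fun t => H t (σ q.2)) q.1) * (H q.1 (σ q.2) - p)
  have hF : Continuous F :=
    ((continuous_star.comp_continuousOn hderivcont).mul
      (hcont.sub continuousOn_const)).comp_continuous
        (show Continuous fun q : ℝ × ℝ => (q.1, σ q.2) by fun_prop) fun q => ⟨trivial, hσ q.2⟩
  have h0 : ∀ q, F q ≠ 0 := fun q =>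
    mul_ne_zero (star_ne_zero.2 (hHimm _ _ (hσ _))) (sub_ne_zero.2 (hHne _ _ (hσ _)))
  have hper : ∀ t s, F (t + 1, s) = F (t, s) := fun t s => by
    simp only [F, ← deriv_comp_add_const, hHper _ _ (hσ s)]
  obtain ⟨L, n, hL, hexp, hLper⟩ := exists_exp_lift_add_int_mul_two_pi_I hF h0 hper
  have hF₀ : ∀ t, F (t, 0) = star (deriv γ₀ t) * (γ₀ t - p) := by simp [F, σ, hH₀]
  have hF₁ : ∀ t, F (t, 1) = star (deriv γ₁ t) * (γ₁ t - p) := by simp [F, σ, hH₁]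
  have hN₀ := sum_neg_sign_re_mul_sign_deriv_eq_neg_two_mul (by fun_prop)
    (fun t => (hexp _).trans (hF₀ t)) (fun t => hLper t 0) (congrFun hg₀) hZ₀ hreg₀
  have hN₁ := sum_neg_sign_re_mul_sign_deriv_eq_neg_two_mul (by fun_prop)
    (fun t => (hexp _).trans (hF₁ t)) (fun t => hLper t 1) (congrFun hg₁) hZ₁ hreg₁
  exact hN₀.trans hN₁.symm

/-- Invariance of the algebraic number `N₁(p, γ)` of tangent lines through `p` under
regular homotopy of `γ` in the class of immersions in `ℂ ∖ {p}`. -/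
theorem tangent_lines_count_regular_homotopy_invariant (p : ℂ)
    (γ₀ γ₁ : ℝ → ℂ) (hγ₀ : ContDiff ℝ 2 γ₀) (hγ₁ : ContDiff ℝ 2 γ₁)
    (hper₀ : ∀ t, γ₀ (t + 1) = γ₀ t) (hper₁ : ∀ t, γ₁ (t + 1) = γ₁ t)
    (himm₀ : ∀ t, deriv γ₀ t ≠ 0) (himm₁ : ∀ t, deriv γ₁ t ≠ 0)
    (hp₀ : ∀ t, γ₀ t ≠ p) (hp₁ : ∀ t, γ₁ t ≠ p)
    (H : ℝ → ℝ → ℂ)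
    (hcont : ContinuousOn (fun q : ℝ × ℝ => H q.1 q.2) (Set.univ ×ˢ Set.Icc 0 1))
    (hHper : ∀ t : ℝ, ∀ s ∈ Set.Icc (0:ℝ) 1, H (t + 1) s = H t s)
    (hHne : ∀ t : ℝ, ∀ s ∈ Set.Icc (0:ℝ) 1, H t s ≠ p)
    (hHC1 : ∀ s ∈ Set.Icc (0:ℝ) 1, ContDiff ℝ 1 (fun t => H t s))
    (hHimm : ∀ t : ℝ, ∀ s ∈ Set.Icc (0:ℝ) 1, deriv (fun t' => H t' s) t ≠ 0)
    (hderivcont : ContinuousOn (fun q : ℝ × ℝ => deriv (fun t' => H t' q.2) q.1)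
      (Set.univ ×ˢ Set.Icc 0 1))
    (hH₀ : ∀ t, H t 0 = γ₀ t) (hH₁ : ∀ t, H t 1 = γ₁ t)
    (g₀ g₁ : ℝ → ℝ)
    (hg₀ : g₀ = fun t => (star (deriv γ₀ t) * (γ₀ t - p)).im)
    (hg₁ : g₁ = fun t => (star (deriv γ₁ t) * (γ₁ t - p)).im)
    (hZ₀ : {t ∈ Set.Ico (0:ℝ) 1 | g₀ t = 0}.Finite)
    (hZ₁ : {t ∈ Set.Ico (0:ℝ) 1 | g₁ t = 0}.Finite)
    (hreg₀ : ∀ t ∈ {t ∈ Set.Ico (0:ℝ) 1 | g₀ t = 0}, deriv g₀ t ≠ 0)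
    (hreg₁ : ∀ t ∈ {t ∈ Set.Ico (0:ℝ) 1 | g₁ t = 0}, deriv g₁ t ≠ 0) :
    ∑ t ∈ hZ₀.toFinset,
        -Real.sign ((star (deriv γ₀ t) * (γ₀ t - p)).re) * Real.sign (deriv g₀ t)
      = ∑ t ∈ hZ₁.toFinset,
          -Real.sign ((star (deriv γ₁ t) * (γ₁ t - p)).re) * Real.sign (deriv g₁ t) :=
  tangent_lines_count_regular_homotopy_invariant_general p γ₀ γ₁ H hcont hHper hHne hHimm hderivcont
    hH₀ hH₁ g₀ g₁ hg₀ hg₁ hZ₀ hZ₁ hreg₀ hreg₁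
end
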